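/- arXiv:1109.6517 — 11 statements merged into one kernel-verified Lean document; each statement's English description precedes it below -/
import Mathlib

section
/- Let X be a Lindelöf topological space such that every point x has an open neighborhood U(x) admitting a point-countable p-metabase. Then X itself has a point-countable p-metabase. -/
/-!
Cover `X` by countably many of the open sets `U x` (Lindelöf) and take, for each of them, the
images in `X` of the members of its point-countable p-metabase, together with the sets `U x`
themselves. Two distinct points lying in a common `U x` are separated by the image of the
local p-metabase, since `U x` is open in `X`; if `y ∉ U x`, the single set `U x` separates `x`
from `y`. Countably many point-countable families have a point-countable union.
-/

open Topology Set

/-- `𝒜` is a p-metabase for `X`: all members are open, and for distinct `x, y`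
there is a finite subfamily `F ⊆ 𝒜` with `x ∈ interior (⋃₀ F)` and `⋃₀ F ⊆ X \ {y}`. -/
def IsPMetabase (X : Type*) [TopologicalSpace X] (𝒜 : Set (Set X)) : Prop :=
  (∀ A ∈ 𝒜, IsOpen A) ∧
  ∀ x y : X, x ≠ y → ∃ F : Finset (Set X), ↑F ⊆ 𝒜 ∧
    x ∈ interior (⋃₀ (F : Set (Set X))) ∧ ⋃₀ (F : Set (Set X)) ⊆ {y}ᶜ

/-- `𝒜` is point-countable: each point lies in at most countably many members. -/
def PointCountable {X : Type*} (𝒜 : Set (Set X)) : Prop :=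
  ∀ x : X, {A ∈ 𝒜 | x ∈ A}.Countable

section PointCountable

variable {X Y : Type*}

theorem Set.Countable.pointCountable {𝒜 : Set (Set X)} (h𝒜 : 𝒜.Countable) :
    PointCountable 𝒜 :=
  fun _ => h𝒜.mono (sep_subset _ _)

theorem PointCountable.union {𝒜 ℬ : Set (Set X)} (h𝒜 : PointCountable 𝒜)
    (hℬ : PointCountable ℬ) : PointCountable (𝒜 ∪ ℬ) := fun x =>
  ((h𝒜 x).union (hℬ x)).mono fun _ ⟨hA, hxA⟩ => hA.imp (⟨·, hxA⟩) (⟨·, hxA⟩)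

theorem PointCountable.iUnion {ι : Sort*} [Countable ι] {𝒜 : ι → Set (Set X)}
    (h𝒜 : ∀ i, PointCountable (𝒜 i)) : PointCountable (⋃ i, 𝒜 i) := fun x => by
  refine (countable_iUnion fun i => h𝒜 i x).mono ?_
  rintro A ⟨hA, hxA⟩
  obtain ⟨i, hi⟩ := mem_iUnion.1 hA
  exact mem_iUnion.2 ⟨i, hi, hxA⟩

theorem PointCountable.image_image {f : Y → X} (hf : Function.Injective f) {𝒜 : Set (Set Y)}
    (h𝒜 : PointCountable 𝒜) : PointCountable (image f '' 𝒜) := fun x => by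
  rcases em (x ∈ range f) with ⟨y, rfl⟩ | hx
  · refine ((h𝒜 y).image (image f)).mono ?_
    rintro _ ⟨⟨B, hB, rfl⟩, hyB⟩
    exact ⟨B, ⟨hB, hf.mem_set_image.1 hyB⟩, rfl⟩
  · refine countable_empty.mono ?_
    rintro _ ⟨⟨B, -, rfl⟩, ⟨y, -, rfl⟩⟩
    exact hx (mem_range_self y)

end PointCountable

section PSeparates

variable {X Y : Type*} [TopologicalSpace X] [TopologicalSpace Y]

-- `IsPMetabase X 𝒜` unfolds to `(∀ A ∈ 𝒜, IsOpen A) ∧ ∀ x y, x ≠ y → PSeparates 𝒜 x y`.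
def PSeparates (𝒜 : Set (Set X)) (x y : X) : Prop :=
  ∃ F : Finset (Set X), ↑F ⊆ 𝒜 ∧ x ∈ interior (⋃₀ (F : Set (Set X))) ∧
    ⋃₀ (F : Set (Set X)) ⊆ {y}ᶜ

theorem PSeparates.mono {𝒜 ℬ : Set (Set X)} {x y : X} (h : PSeparates 𝒜 x y) (h𝒜ℬ : 𝒜 ⊆ ℬ) :
    PSeparates ℬ x y :=
  let ⟨F, hF, hx, hy⟩ := h
  ⟨F, hF.trans h𝒜ℬ, hx, hy⟩

theorem pSeparates_of_isOpen_mem {𝒜 : Set (Set X)} {U : Set X} {x y : X} (hU : IsOpen U)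
    (hU𝒜 : U ∈ 𝒜) (hx : x ∈ U) (hy : y ∉ U) : PSeparates 𝒜 x y :=
  ⟨{U}, by simpa using hU𝒜, by simpa [hU.interior_eq] using hx,
    by simpa using hy⟩

theorem PSeparates.image_image_of_isOpenEmbedding {f : Y → X} (hf : IsOpenEmbedding f)
    {𝒜 : Set (Set Y)} {x y : Y} (h : PSeparates 𝒜 x y) :
    PSeparates (image f '' 𝒜) (f x) (f y) := by
  classical
  obtain ⟨F, hF𝒜, hx, hy⟩ := h
  have hunion : ⋃₀ ((F.image (image f) : Finset (Set X)) : Set (Set X)) =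
      f '' ⋃₀ (F : Set (Set Y)) := by
    rw [Finset.coe_image, image_sUnion]
  refine ⟨F.image (image f), by simpa using image_mono hF𝒜, ?_, ?_⟩
  · rw [hunion]
    exact hf.isOpenMap.image_interior_subset _ (mem_image_of_mem f hx)
  · rw [hunion]
    rintro _ ⟨z, hz, rfl⟩ (hzy : f z = f y)
    exact hy hz (hf.injective hzy)

end PSeparates

section Gluing

variable {X : Type*} {ι : Type*}

def gluedFamily (U : ι → Set X) (𝒜 : ∀ i, Set (Set (U i))) : Set (Set X) :=
  (⋃ i, image Subtype.val '' 𝒜 i) ∪ range U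

theorem isPMetabase_gluedFamily [TopologicalSpace X] {U : ι → Set X} {𝒜 : ∀ i, Set (Set (U i))}
    (hU : ∀ i, IsOpen (U i)) (hcover : ⋃ i, U i = univ) (h𝒜 : ∀ i, IsPMetabase (U i) (𝒜 i)) :
    IsPMetabase X (gluedFamily U 𝒜) := by
  refine ⟨?_, fun x y hxy => ?_⟩
  · rintro A (hA | ⟨i, rfl⟩)
    · obtain ⟨i, B, hB, rfl⟩ := by simpa only [mem_iUnion] using hA
      exact (hU i).isOpenMap_subtype_val B ((h𝒜 i).1 B hB)
    · exact hU i
  obtain ⟨i, hxi⟩ := mem_iUnion.1 (hcover ▸ mem_univ x)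
  by_cases hyi : y ∈ U i
  · have hsep := (h𝒜 i).2 ⟨x, hxi⟩ ⟨y, hyi⟩ fun h => hxy (congrArg Subtype.val h)
    exact (PSeparates.image_image_of_isOpenEmbedding (hU i).isOpenEmbedding_subtypeVal
      hsep).mono ((subset_iUnion (fun j => image Subtype.val '' 𝒜 j) i).trans subset_union_left)
  · exact pSeparates_of_isOpen_mem (hU i) (Or.inr (mem_range_self i)) hxi hyi

theorem pointCountable_gluedFamily [Countable ι] {U : ι → Set X} {𝒜 : ∀ i, Set (Set (U i))}
    (h𝒜 : ∀ i, PointCountable (𝒜 i)) : PointCountable (gluedFamily U 𝒜) :=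
  (PointCountable.iUnion fun i => (h𝒜 i).image_image Subtype.val_injective).union
    (countable_range U).pointCountable

end Gluing

theorem lindelof_locally_pMetabase {X : Type*} [TopologicalSpace X] [LindelofSpace X]
    (h : ∀ x : X, ∃ U : Set X, IsOpen U ∧ x ∈ U ∧
      ∃ 𝒜 : Set (Set ↥U), IsPMetabase ↥U 𝒜 ∧ PointCountable 𝒜) :
    ∃ 𝒜 : Set (Set X), IsPMetabase X 𝒜 ∧ PointCountable 𝒜 := by
  choose U hU hxU 𝒜 h𝒜 hpc using h
  obtain ⟨t, ht, hcover⟩ := countable_cover_nhds fun x => (hU x).mem_nhds (hxU x)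
  have : Countable t := ht.to_subtype
  rw [biUnion_eq_iUnion] at hcover
  exact ⟨gluedFamily (fun i : t => U i) (fun i => 𝒜 i),
    isPMetabase_gluedFamily (fun i => hU i) hcover fun i => h𝒜 i,
    pointCountable_gluedFamily fun i => hpc i⟩
end

section
/- If a topological space X has a point-countable p-metabase, then every countably compact subset of X is compact. -/
open Topology Set

/-- `K` is countably compact: every countable open cover of `K` has a finite subcover. -/
def CountablyCompactSet {X : Type*} [TopologicalSpace X] (K : Set X) : Prop :=
  ∀ U : ℕ → Set X, (∀ n, IsOpen (U n)) → K ⊆ ⋃ n, U n →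
    ∃ s : Finset ℕ, K ⊆ ⋃ n ∈ s, U n

/-!
Suppose `K` is countably compact but not compact. A maximal filter `𝒢` of closed sets meeting `K`
traces on `K` to a filter that is closed under countable intersections (by countable compactness),
decides every open set (by maximality), and can be chosen without cluster points in `K`. The
members `A` of the p-metabase with `Aᶜ ∈ 𝒢` cannot cover `K`: they would form a point-countable
open cover, and in a countably compact set such a cover has a finite subcover. At a point `z ∈ K`
outside all of them, every member of the p-metabase through `z` lies in `𝒢`; there are countably
many, and their intersection is `{z}` since a p-metabase separates points, so `𝒢` converges to `z`.
-/

open Filter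

theorem PointCountable.mono {X : Type*} {𝒜 𝒰 : Set (Set X)} (h𝒜 : PointCountable 𝒜)
    (h𝒰 : 𝒰 ⊆ 𝒜) : PointCountable 𝒰 :=
  fun x => (h𝒜 x).mono fun _ hU => show _ ∈ {A ∈ 𝒜 | x ∈ A} from ⟨h𝒰 hU.1, hU.2⟩

section

variable {X : Type*} [TopologicalSpace X] {K : Set X}

theorem IsPMetabase.exists_mem_notMem {𝒜 : Set (Set X)} (h𝒜 : IsPMetabase X 𝒜) {x y : X}
    (hxy : x ≠ y) : ∃ A ∈ 𝒜, x ∈ A ∧ y ∉ A := by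
  obtain ⟨F, hF𝒜, hxF, hFy⟩ := h𝒜.2 x y hxy
  obtain ⟨A, hAF, hxA⟩ := interior_subset hxF
  exact ⟨A, hF𝒜 hAF, hxA, fun hyA => hFy ⟨A, hAF, hyA⟩ rfl⟩

namespace IsCountablyCompact

theorem sInter_inter_nonempty (hK : IsCountablyCompact K) {𝒞 : Set (Set X)}
    (h𝒞 : 𝒞.Countable) (hclosed : ∀ C ∈ 𝒞, IsClosed C)
    (hfin : ∀ 𝒟 ⊆ 𝒞, 𝒟.Finite → (⋂₀ 𝒟 ∩ K).Nonempty) : (⋂₀ 𝒞 ∩ K).Nonempty := by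
  by_contra! hempty
  have hcov : K ⊆ ⋃ C ∈ 𝒞, Cᶜ := fun x hxK => by
    simpa using fun hx => hempty.subset ⟨hx, hxK⟩
  obtain ⟨𝒟, h𝒟, h𝒟fin, hK𝒟⟩ :=
    hK.elim_finite_subcover_image h𝒞 (fun C hC => (hclosed C hC).isOpen_compl) hcov
  obtain ⟨x, hx𝒟, hxK⟩ := hfin 𝒟 h𝒟 h𝒟fin
  obtain ⟨C, hC, hxC⟩ := mem_iUnion₂.1 (hK𝒟 hxK)
  exact hxC (hx𝒟 C hC)

theorem exists_finite_subcover_of_countable (hK : IsCountablyCompact K) {𝒰 : Set (Set X)}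
    (h𝒰 : 𝒰.Countable) (hopen : ∀ U ∈ 𝒰, IsOpen U) (hcov : K ⊆ ⋃₀ 𝒰) :
    ∃ 𝒱 ⊆ 𝒰, 𝒱.Finite ∧ K ⊆ ⋃₀ 𝒱 := by
  rw [sUnion_eq_biUnion] at hcov
  simpa only [sUnion_eq_biUnion, id] using hK.elim_finite_subcover_image h𝒰 (U := id) hopen hcov

theorem exists_finite_subcover_of_pointCountable (hK : IsCountablyCompact K)
    {𝒰 : Set (Set X)} (h𝒰 : PointCountable 𝒰) (hopen : ∀ U ∈ 𝒰, IsOpen U)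
    (hcov : K ⊆ ⋃₀ 𝒰) : ∃ 𝒱 ⊆ 𝒰, 𝒱.Finite ∧ K ⊆ ⋃₀ 𝒱 := by
  by_contra! hfin
  have hcountable : ∀ 𝒱 ⊆ 𝒰, 𝒱.Countable → ¬K ⊆ ⋃₀ 𝒱 := fun 𝒱 h𝒱 hc hK𝒱 =>
    let ⟨𝒲, h𝒲, h𝒲fin, hK𝒲⟩ :=
      hK.exists_finite_subcover_of_countable hc (fun U hU => hopen U (h𝒱 hU)) hK𝒱
    hfin 𝒲 (h𝒲.trans h𝒱) h𝒲fin hK𝒲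
  -- Each new point avoids the countably many members of `𝒰` that contain an earlier point.
  obtain ⟨x, hxK, hx⟩ := exists_seq_of_forall_finset_exists (· ∈ K)
      (fun a b => ∀ U ∈ 𝒰, a ∈ U → b ∉ U) fun s _ => by
    have hs : {U ∈ 𝒰 | ∃ a ∈ s, a ∈ U} ⊆ ⋃ a ∈ (s : Set X), {U ∈ 𝒰 | a ∈ U} := by
      rintro U ⟨hU, a, ha, haU⟩
      exact mem_biUnion ha ⟨hU, haU⟩
    obtain ⟨y, hyK, hy⟩ := not_subset.1 (hcountable _ (sep_subset _ _)
      ((s.countable_toSet.biUnion fun a _ => h𝒰 a).mono hs))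
    exact ⟨y, hyK, fun a ha U hU haU hyU => hy ⟨U, ⟨hU, a, ha, haU⟩, hyU⟩⟩
  obtain ⟨z, hzK, hz⟩ := isCountablyCompact_iff_seq_clusterPt.1 hK x (.of_forall hxK)
  obtain ⟨U, hU, hzU⟩ := hcov hzK
  have hfreq : ∃ᶠ n in atTop, x n ∈ U := hz.frequently ((hopen U hU).mem_nhds hzU)
  obtain ⟨m, hm⟩ := hfreq.exists
  obtain ⟨n, hmn, hn⟩ := frequently_atTop.1 hfreq (m + 1)
  exact hx m n hmn U hU hm hn

end IsCountablyCompact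

namespace Filter

def IsClosedGenerated (g : Filter X) : Prop :=
  ∀ s ∈ g, ∃ t ∈ g, IsClosed t ∧ t ⊆ s

theorem isClosedGenerated_lift'_closure (f : Filter X) : (f.lift' closure).IsClosedGenerated := by
  intro s hs
  obtain ⟨t, ht, hts⟩ := (mem_lift'_sets (monotone_closure X)).1 hs
  exact ⟨closure t, mem_lift' ht, isClosed_closure, hts⟩

theorem IsClosedGenerated.inf_principal {g : Filter X} (hg : g.IsClosedGenerated) {C : Set X}
    (hC : IsClosed C) : (g ⊓ 𝓟 C).IsClosedGenerated := by
  intro s hs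
  obtain ⟨u, hu, v, hv, huv⟩ := mem_inf_iff_superset.1 hs
  obtain ⟨t, htg, htc, htu⟩ := hg u hu
  exact ⟨t ∩ C, inter_mem_inf htg (mem_principal_self C), htc.inter hC,
    (inter_subset_inter htu (mem_principal.1 hv)).trans huv⟩

/-- A maximal filter generated by closed sets all of whose members meet `K` (maximal as a family
of sets, hence `Minimal` in the order of filters). -/
def IsClosedUltrafilterOn (K : Set X) (g : Filter X) : Prop :=
  Minimal (fun g : Filter X => g.IsClosedGenerated ∧ (g ⊓ 𝓟 K).NeBot) g

theorem exists_isClosedUltrafilterOn_le {f : Filter X} (hf : f.IsClosedGenerated)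
    (hfK : (f ⊓ 𝓟 K).NeBot) : ∃ g ≤ f, g.IsClosedUltrafilterOn K := by
  set P : Set (Filter X)ᵒᵈ :=
    {g | (OrderDual.ofDual g).IsClosedGenerated ∧ (OrderDual.ofDual g ⊓ 𝓟 K).NeBot}
  suffices hchains : ∀ c ⊆ P, IsChain (· ≤ ·) c → ∀ g₀ ∈ c, ∃ lb ∈ P, ∀ g ∈ c, g ≤ lb by
    obtain ⟨g, hgf, hg⟩ := zorn_le_nonempty₀ P hchains (OrderDual.toDual f) ⟨hf, hfK⟩
    exact ⟨OrderDual.ofDual g, hgf, minimal_toDual.2 hg⟩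
  intro c hc hchain g₀ hg₀
  have : Nonempty c := ⟨⟨g₀, hg₀⟩⟩
  have hdir : Directed (· ≥ ·) fun g : c => OrderDual.ofDual g.1 :=
    hchain.directedOn.directed_val
  have hmem (s : Set X) : s ∈ ⨅ g : c, OrderDual.ofDual g.1 ↔ ∃ g : c, s ∈ OrderDual.ofDual g.1 :=
    mem_iInf_of_directed hdir s
  refine ⟨OrderDual.toDual (⨅ g : c, OrderDual.ofDual g.1), ⟨fun s hs => ?_, ?_⟩,
    fun g hg => iInf_le (fun g : c => OrderDual.ofDual g.1) ⟨g, hg⟩⟩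
  · obtain ⟨g, hsg⟩ := (hmem s).1 hs
    obtain ⟨t, htg, htc, hts⟩ := (hc g.2).1 s hsg
    exact ⟨t, (hmem t).2 ⟨g, htg⟩, htc, hts⟩
  · refine inf_principal_neBot_iff.2 fun s hs => ?_
    obtain ⟨g, hsg⟩ := (hmem s).1 hs
    exact inf_principal_neBot_iff.1 (hc g.2).2 s hsg

namespace IsClosedUltrafilterOn

variable {g : Filter X}

theorem mem_of_isClosed (hg : g.IsClosedUltrafilterOn K) {C : Set X} (hC : IsClosed C)
    (hCK : (g ⊓ 𝓟 C ⊓ 𝓟 K).NeBot) : C ∈ g :=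
  le_principal_iff.1 ((hg.2 ⟨hg.1.1.inf_principal hC, hCK⟩ inf_le_left).trans inf_le_right)

theorem mem_or_compl_mem (hg : g.IsClosedUltrafilterOn K) {U : Set X} (hU : IsOpen U) :
    U ∈ g ⊓ 𝓟 K ∨ Uᶜ ∈ g ⊓ 𝓟 K := by
  by_cases hUK : (g ⊓ 𝓟 Uᶜ ⊓ 𝓟 K).NeBot
  · exact .inr (mem_inf_of_left (hg.mem_of_isClosed hU.isClosed_compl hUK))
  · rw [not_neBot, inf_right_comm, inf_principal_eq_bot, compl_compl] at hUK
    exact .inl hUK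

theorem countableInterFilter (hg : g.IsClosedUltrafilterOn K) (hK : IsCountablyCompact K) :
    CountableInterFilter g := by
  refine ⟨fun S hS hSg => ?_⟩
  have hmeet : ∀ u ∈ g, (u ∩ K).Nonempty := inf_principal_neBot_iff.1 hg.1.2
  choose! t htg htc hts using fun s hs => hg.1.1 s (hSg s hs)
  suffices ⋂₀ (t '' S) ∈ g from
    mem_of_superset this fun x hx s hs => hts s hs (hx _ (mem_image_of_mem t hs))
  refine hg.mem_of_isClosed (isClosed_sInter (forall_mem_image.2 htc)) ?_
  rw [inf_assoc, inf_principal, inf_principal_neBot_iff]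
  intro u hu
  obtain ⟨u', hu'g, hu'c, hu'u⟩ := hg.1.1 u hu
  have hmem : ∀ C ∈ insert u' (t '' S), C ∈ g :=
    forall_mem_insert.2 ⟨hu'g, forall_mem_image.2 htg⟩
  obtain ⟨x, hx, hxK⟩ := hK.sInter_inter_nonempty ((hS.image t).insert u')
    (forall_mem_insert.2 ⟨hu'c, forall_mem_image.2 htc⟩)
    fun 𝒟 h𝒟 h𝒟fin => hmeet _ ((sInter_mem h𝒟fin).2 fun C hC => hmem C (h𝒟 hC))
  rw [sInter_insert] at hx
  exact ⟨x, hu'u hx.1, hx.2, hxK⟩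

end IsClosedUltrafilterOn

end Filter

theorem exists_le_pure_of_pointCountable (hK : IsCountablyCompact K) {𝒜 : Set (Set X)}
    (h𝒜 : PointCountable 𝒜) (hopen : ∀ A ∈ 𝒜, IsOpen A)
    (hsep : ∀ x y : X, x ≠ y → ∃ A ∈ 𝒜, x ∈ A ∧ y ∉ A) {h : Filter X} [NeBot h]
    [CountableInterFilter h] (hKh : K ∈ h) (hultra : ∀ A ∈ 𝒜, A ∈ h ∨ Aᶜ ∈ h) :
    ∃ z ∈ K, h ≤ pure z := by
  by_cases hcov : K ⊆ ⋃₀ {A ∈ 𝒜 | Aᶜ ∈ h}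
  · obtain ⟨𝒱, h𝒱, h𝒱fin, hK𝒱⟩ := hK.exists_finite_subcover_of_pointCountable
      (h𝒜.mono (sep_subset _ _)) (fun A hA => hopen A hA.1) hcov
    have hmem : K ∩ ⋂₀ (compl '' 𝒱) ∈ h :=
      inter_mem hKh ((sInter_mem (h𝒱fin.image _)).2 (forall_mem_image.2 fun A hA => (h𝒱 hA).2))
    obtain ⟨x, hxK, hx⟩ := Filter.nonempty_of_mem hmem
    obtain ⟨A, hA, hxA⟩ := hK𝒱 hxK
    exact absurd hxA (hx _ (mem_image_of_mem _ hA))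
  obtain ⟨z, hzK, hz⟩ := not_subset.1 hcov
  have hz𝒜 : ∀ A ∈ {A ∈ 𝒜 | z ∈ A}, A ∈ h := fun A hA =>
    (hultra A hA.1).resolve_right fun hAc => hz ⟨A, ⟨hA.1, hAc⟩, hA.2⟩
  refine ⟨z, hzK, le_pure_iff.2 (mem_of_superset ((countable_sInter_mem (h𝒜 z)).2 hz𝒜) ?_)⟩
  intro w hw
  by_contra hwz
  obtain ⟨A, hA, hzA, hwA⟩ := hsep z w (Ne.symm hwz)
  exact hwA (hw A ⟨hA, hzA⟩)

end

theorem countablyCompact_isCompact_of_pMetabase {X : Type*} [TopologicalSpace X]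
    (𝒜 : Set (Set X)) (h𝒜 : IsPMetabase X 𝒜) (hpc : PointCountable 𝒜)
    (K : Set X) (hK : CountablyCompactSet K) : IsCompact K := by
  have hK' : IsCountablyCompact K := isCountablyCompact_iff_countable_open_cover.2 hK
  intro f _ hfK
  by_contra! hf
  obtain ⟨g, hgf, hg⟩ := exists_isClosedUltrafilterOn_le (isClosedGenerated_lift'_closure f)
    (NeBot.mono ‹_› (le_inf (le_lift'_closure f) hfK))
  have := hg.countableInterFilter hK'
  have := hg.1.2
  obtain ⟨z, hzK, hz⟩ := exists_le_pure_of_pointCountable hK' hpc h𝒜.1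
    (fun _ _ => h𝒜.exists_mem_notMem) (mem_inf_of_right (mem_principal_self K))
    fun A hA => hg.mem_or_compl_mem (h𝒜.1 A hA)
  have hzg : ClusterPt z (g ⊓ 𝓟 K) := .of_le_nhds (hz.trans (pure_le_nhds z))
  exact hf z hzK (clusterPt_lift'_closure_iff.1 ((hzg.mono inf_le_left).mono hgf))
end

section
/- If a topological space X has a point-countable p-metabase, then every compact subset K of X is a Gδ-subset of X, i.e., K is the intersection of countably many open subsets of X. -/
open Topology Set

/-!
Miščenko's lemma: since every point lies in only countably many members of `𝒜`, a minimal
finite subcover of `K` with `n + 1` members is determined by a member `A` containing a fixed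
point of `K` together with a minimal subcover of `K \ A` with `n` members, so by induction
there are only countably many minimal finite subcovers of `K`. If `K` is compact and `y ∉ K`,
the p-metabase property and compactness give a finite subcover of `K` avoiding `y`, and so
does a minimal subcover contained in it. Hence `K` is the intersection of the countably many
open sets `⋃₀ F`, `F` a minimal finite subcover.
-/

section Cover

variable {X : Type*} {𝒜 : Set (Set X)} {K : Set X} {F : Finset (Set X)}

def IsFinSubcover (𝒜 : Set (Set X)) (K : Set X) (F : Finset (Set X)) : Prop :=
  ↑F ⊆ 𝒜 ∧ K ⊆ ⋃₀ ↑F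

theorem IsFinSubcover.exists_minimal_le (hF : IsFinSubcover 𝒜 K F) :
    ∃ G ≤ F, Minimal (IsFinSubcover 𝒜 K) G :=
  exists_minimal_le_of_wellFoundedLT _ F hF

theorem Minimal.isFinSubcover_erase [DecidableEq (Set X)] {A : Set X}
    (hF : Minimal (IsFinSubcover 𝒜 K) F) (hA : A ∈ F) :
    Minimal (IsFinSubcover 𝒜 (K \ A)) (F.erase A) := by
  refine ⟨⟨?_, ?_⟩, fun G hG hGF ↦ ?_⟩
  · exact (Finset.coe_subset.mpr (F.erase_subset A)).trans hF.prop.1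
  · intro x ⟨hxK, hxA⟩
    obtain ⟨B, hB, hxB⟩ := hF.prop.2 hxK
    exact ⟨B, Finset.mem_coe.mpr (Finset.mem_erase.mpr ⟨fun h ↦ hxA (h ▸ hxB), hB⟩), hxB⟩
  · have hcover : IsFinSubcover 𝒜 K (insert A G) := by
      refine ⟨?_, fun x hxK ↦ ?_⟩
      · rw [Finset.coe_insert]
        exact insert_subset (hF.prop.1 hA) hG.1
      · by_cases hxA : x ∈ A
        · exact ⟨A, by simp, hxA⟩
        · obtain ⟨B, hB, hxB⟩ := hG.2 ⟨hxK, hxA⟩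
          exact ⟨B, by simp [hB], hxB⟩
    have hle : insert A G ≤ F := Finset.insert_subset hA (hGF.trans (F.erase_subset A))
    exact Finset.subset_insert_iff.mp (hF.2 hcover hle)

theorem PointCountable.countable_setOf_minimal_isFinSubcover_card (hpc : PointCountable 𝒜)
    (n : ℕ) (K : Set X) :
    {F | Minimal (IsFinSubcover 𝒜 K) F ∧ F.card = n}.Countable := by
  classical
  induction n generalizing K with
  | zero =>
    exact (countable_singleton ∅).mono fun F hF ↦ Finset.card_eq_zero.mp hF.2
  | succ n ih =>
    rcases K.eq_empty_or_nonempty with rfl | ⟨x, hx⟩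
    · refine countable_empty.mono fun F ⟨hF, hcard⟩ ↦ ?_
      have hF_empty : F ≤ ∅ := hF.2 ⟨by simp, empty_subset _⟩ (Finset.empty_subset F)
      simp [Finset.subset_empty.mp hF_empty] at hcard
    · refine ((hpc x).biUnion fun A _ ↦ (ih (K \ A)).image (insert A)).mono ?_
      rintro F ⟨hF, hcard⟩
      obtain ⟨A, hAF, hxA⟩ := hF.prop.2 hx
      refine mem_biUnion ⟨hF.prop.1 hAF, hxA⟩ ⟨F.erase A, ⟨hF.isFinSubcover_erase hAF, ?_⟩, ?_⟩
      · rw [Finset.card_erase_of_mem hAF, hcard, Nat.add_sub_cancel]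
      · exact Finset.insert_erase hAF

theorem PointCountable.countable_setOf_minimal_isFinSubcover (hpc : PointCountable 𝒜)
    (K : Set X) : {F | Minimal (IsFinSubcover 𝒜 K) F}.Countable := by
  refine (countable_iUnion fun n ↦ hpc.countable_setOf_minimal_isFinSubcover_card n K).mono ?_
  exact fun F hF ↦ mem_iUnion_of_mem F.card ⟨hF, rfl⟩

end Cover

theorem IsPMetabase.exists_isFinSubcover_of_isCompact {X : Type*} [TopologicalSpace X]
    {𝒜 : Set (Set X)} (h𝒜 : IsPMetabase X 𝒜) {K : Set X} (hK : IsCompact K) {y : X}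
    (hy : y ∉ K) : ∃ F, IsFinSubcover 𝒜 K F ∧ y ∉ ⋃₀ ↑F := by
  classical
  have hsep : ∀ x ∈ K, ∃ F : Finset (Set X), ↑F ⊆ 𝒜 ∧
      x ∈ interior (⋃₀ ↑F) ∧ ⋃₀ ↑F ⊆ {y}ᶜ :=
    fun x hx ↦ h𝒜.2 x y fun h ↦ hy (h ▸ hx)
  choose! f hf𝒜 hfx hfy using hsep
  obtain ⟨t, htK, hKt⟩ := hK.elim_nhds_subcover (fun x ↦ ⋃₀ ↑(f x))
    fun x hx ↦ mem_interior_iff_mem_nhds.mp (hfx x hx)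
  have hunion : ⋃₀ ↑(t.biUnion f) = ⋃ x ∈ t, ⋃₀ (↑(f x) : Set (Set X)) := by
    simp [sUnion_iUnion]
  refine ⟨t.biUnion f, ⟨?_, hunion ▸ hKt⟩, ?_⟩
  · simpa using fun x hx ↦ hf𝒜 x (htK x hx)
  · rw [hunion]
    simpa using fun x hx ↦ hfy x (htK x hx)

theorem IsCompact.isGδ_of_pMetabase {X : Type*} [TopologicalSpace X] {𝒜 : Set (Set X)}
    (h𝒜 : IsPMetabase X 𝒜) (hpc : PointCountable 𝒜) {K : Set X} (hK : IsCompact K) :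
    IsGδ K := by
  refine ⟨(fun F : Finset (Set X) ↦ ⋃₀ ↑F) '' {F | Minimal (IsFinSubcover 𝒜 K) F}, ?_,
    (hpc.countable_setOf_minimal_isFinSubcover K).image _, ?_⟩
  · rintro _ ⟨F, hF, rfl⟩
    exact isOpen_sUnion fun A hA ↦ h𝒜.1 A (hF.prop.1 hA)
  · refine (subset_sInter ?_).antisymm fun y hy ↦ by_contra fun hyK ↦ ?_
    · rintro _ ⟨F, hF, rfl⟩
      exact hF.prop.2
    obtain ⟨F, hF, hyF⟩ := h𝒜.exists_isFinSubcover_of_isCompact hK hyK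
    obtain ⟨G, hGF, hG⟩ := hF.exists_minimal_le
    exact hyF (sUnion_mono (Finset.coe_subset.mpr hGF) (hy _ ⟨G, hG, rfl⟩))

theorem compact_isGdelta_of_pMetabase {X : Type*} [TopologicalSpace X]
    (𝒜 : Set (Set X)) (h𝒜 : IsPMetabase X 𝒜) (hpc : PointCountable 𝒜)
    (K : Set X) (hK : IsCompact K) :
    ∃ U : ℕ → Set X, (∀ n, IsOpen (U n)) ∧ K = ⋂ n, U n :=
  isGδ_iff_eq_iInter_nat.mp (hK.isGδ_of_pMetabase h𝒜 hpc)
end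

section
/- Let X be a Lindelöf topological space such that every point has an open neighborhood admitting a δθ-base. Then X has a δθ-base. -/
/-!
By the Lindelöf property, countably many of the given neighbourhoods `Uᵢ` already cover `X`.
Since each `Uᵢ` is open, the images in `X` of the members of a δθ-base of `Uᵢ` are open, and a
point of `Uᵢ` lies in the image of a member exactly when it lies in the member itself. So the
countably many families `(ℬᵢ)ₙ`, pushed into `X` and re-indexed by `ℕ`, form a δθ-base of `X`.
-/

open Topology Set

/-- `ℬ = ⋃ₙ ℬₙ` is a δθ-base: all members are open and whenever `x ∈ U` open, there
are `n` and `B ∈ ℬₙ` with `x` in at least one and at most countably many members of `ℬₙ`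
and `x ∈ B ⊆ U`. -/
def IsDeltaThetaBase (X : Type*) [TopologicalSpace X] (ℬ : ℕ → Set (Set X)) : Prop :=
  (∀ n, ∀ B ∈ ℬ n, IsOpen B) ∧
  ∀ (x : X) (U : Set X), IsOpen U → x ∈ U →
    ∃ n, ∃ B ∈ ℬ n, x ∈ B ∧ B ⊆ U ∧ {A ∈ ℬ n | x ∈ A}.Countable

theorem exists_isDeltaThetaBase_of_countable_index {X κ : Type*} [TopologicalSpace X]
    [Countable κ] (ℬ : κ → Set (Set X)) (hopen : ∀ k, ∀ B ∈ ℬ k, IsOpen B)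
    (hbase : ∀ (x : X) (U : Set X), IsOpen U → x ∈ U →
      ∃ k, ∃ B ∈ ℬ k, x ∈ B ∧ B ⊆ U ∧ {A ∈ ℬ k | x ∈ A}.Countable) :
    ∃ ℬ' : ℕ → Set (Set X), IsDeltaThetaBase X ℬ' := by
  obtain ⟨e, he⟩ := Countable.exists_injective_nat κ
  have hℬe : ∀ k, {A | ∃ j, e j = e k ∧ A ∈ ℬ j} = ℬ k := fun k ↦ by
    ext A
    exact ⟨fun ⟨j, hj, hA⟩ ↦ he hj ▸ hA, fun hA ↦ ⟨k, rfl, hA⟩⟩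
  refine ⟨fun n ↦ {A | ∃ k, e k = n ∧ A ∈ ℬ k}, fun n A ⟨k, _, hA⟩ ↦ hopen k A hA,
    fun x U hU hxU ↦ ?_⟩
  obtain ⟨k, hk⟩ := hbase x U hU hxU
  exact ⟨e k, by simpa only [hℬe] using hk⟩

namespace IsDeltaThetaBase

variable {X : Type*} [TopologicalSpace X] {U : Set X} {ℬ : ℕ → Set (Set U)}

theorem isOpen_image_val (hU : IsOpen U) (hℬ : IsDeltaThetaBase U ℬ) {n : ℕ} {B : Set U}
    (hB : B ∈ ℬ n) : IsOpen (Subtype.val '' B) :=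
  hU.isOpenMap_subtype_val B (hℬ.1 n B hB)

theorem exists_image_val (hℬ : IsDeltaThetaBase U ℬ) {x : X} (hx : x ∈ U) {V : Set X}
    (hV : IsOpen V) (hxV : x ∈ V) :
    ∃ n, ∃ B ∈ ℬ n, x ∈ Subtype.val '' B ∧ Subtype.val '' B ⊆ V ∧
      {A ∈ (Subtype.val '' ·) '' ℬ n | x ∈ A}.Countable := by
  obtain ⟨n, B, hB, hxB, hBV, hcount⟩ :=
    hℬ.2 ⟨x, hx⟩ _ (hV.preimage continuous_subtype_val) hxV
  refine ⟨n, B, hB, ⟨_, hxB, rfl⟩, image_subset_iff.2 hBV,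
    (hcount.image (Subtype.val '' ·)).mono ?_⟩
  rintro _ ⟨⟨A, hA, rfl⟩, hxA⟩
  exact ⟨A, ⟨hA, Subtype.val_injective.mem_set_image.1 hxA⟩, rfl⟩

end IsDeltaThetaBase

theorem exists_isDeltaThetaBase_of_countable_open_cover {X ι : Type*} [TopologicalSpace X]
    [Countable ι] (U : ι → Set X) (hU : ∀ i, IsOpen (U i)) (hcover : ⋃ i, U i = univ)
    (ℬ : ∀ i, ℕ → Set (Set (U i))) (hℬ : ∀ i, IsDeltaThetaBase (U i) (ℬ i)) :
    ∃ ℬ' : ℕ → Set (Set X), IsDeltaThetaBase X ℬ' := by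
  refine exists_isDeltaThetaBase_of_countable_index
    (fun k : ι × ℕ ↦ (Subtype.val '' ·) '' ℬ k.1 k.2)
    (fun k _ ⟨B, hB, hBA⟩ ↦ hBA ▸ (hℬ k.1).isOpen_image_val (hU k.1) hB) fun x V hV hxV ↦ ?_
  obtain ⟨i, hxi⟩ := iUnion_eq_univ_iff.1 hcover x
  obtain ⟨n, B, hB, hk⟩ := (hℬ i).exists_image_val hxi hV hxV
  exact ⟨(i, n), _, mem_image_of_mem _ hB, hk⟩

theorem lindelof_locally_deltaThetaBase {X : Type*} [TopologicalSpace X] [LindelofSpace X]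
    (h : ∀ x : X, ∃ U : Set X, IsOpen U ∧ x ∈ U ∧
      ∃ ℬ : ℕ → Set (Set ↥U), IsDeltaThetaBase ↥U ℬ) :
    ∃ ℬ : ℕ → Set (Set X), IsDeltaThetaBase X ℬ := by
  choose U hUo hxU ℬ hℬ using h
  obtain ⟨t, htc, hcover⟩ :=
    LindelofSpace.elim_nhds_subcover U fun x ↦ (hUo x).mem_nhds (hxU x)
  have : Countable t := htc.to_subtype
  rw [biUnion_eq_iUnion] at hcover
  exact exists_isDeltaThetaBase_of_countable_open_cover (fun x : t ↦ U x) (fun x ↦ hUo x)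
    hcover (fun x ↦ ℬ x) fun x ↦ hℬ x
end

section
/- Let X be a Lindelöf topological space such that every point has an open neighborhood admitting a quasi-Gδ-diagonal. Then X has a quasi-Gδ-diagonal. -/
open Topology Set

/-- The star of `x` with respect to a family `𝒢`. -/
def star' {X : Type*} (x : X) (𝒢 : Set (Set X)) : Set X := ⋃₀ {G ∈ 𝒢 | x ∈ G}

/-- `X` has a quasi-Gδ-diagonal: there is a sequence `𝒢ₙ` of families of open sets such
that for distinct `x ≠ y` there is `n` with `x ∈ st(x, 𝒢ₙ) ⊆ X \ {y}`. -/
def HasQuasiGDeltaDiagonal (X : Type*) [TopologicalSpace X] : Prop :=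
  ∃ 𝒢 : ℕ → Set (Set X), (∀ n, ∀ G ∈ 𝒢 n, IsOpen G) ∧
    ∀ x y : X, x ≠ y → ∃ n, x ∈ star' x (𝒢 n) ∧ star' x (𝒢 n) ⊆ {y}ᶜ

/-! By the Lindelöf property countably many open sets `U i`, each with a quasi-Gδ-diagonal,
cover `X`. A point `x ∈ U i` is separated from `y ∉ U i` by the star of `{U i}`, and from
`y ∈ U i` by the images in `X` of the families witnessing the quasi-Gδ-diagonal of `U i`, which
are open because `U i` is. The countably many families so obtained are enumerated into a
sequence. -/

lemma star'_singleton {X : Type*} {x : X} {U : Set X} (hx : x ∈ U) : star' x {U} = U := by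
  ext z
  simp [star', hx]

lemma star'_image_val {X : Type*} {U : Set X} {x : X} (hx : x ∈ U) (𝒢 : Set (Set U)) :
    star' x ((Subtype.val '' ·) '' 𝒢) = Subtype.val '' star' ⟨x, hx⟩ 𝒢 := by
  ext z
  simp only [star']
  aesop

namespace HasQuasiGDeltaDiagonal

variable {X : Type*} [TopologicalSpace X]

lemma of_countable {ι : Type*} [Countable ι] {𝒢 : ι → Set (Set X)}
    (hopen : ∀ i, ∀ G ∈ 𝒢 i, IsOpen G)
    (hsep : ∀ x y : X, x ≠ y → ∃ i, x ∈ star' x (𝒢 i) ∧ star' x (𝒢 i) ⊆ {y}ᶜ) :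
    HasQuasiGDeltaDiagonal X := by
  have := Encodable.ofCountable ι
  -- indices `n` outside the range of `encode` get the empty family
  refine ⟨fun n => ⋃ i ∈ Encodable.decode₂ ι n, 𝒢 i, fun n G hG => ?_, fun x y hxy => ?_⟩
  · obtain ⟨i, -, hG⟩ := mem_iUnion₂.1 hG
    exact hopen i G hG
  · obtain ⟨i, hi⟩ := hsep x y hxy
    exact ⟨Encodable.encode i, by simpa [Encodable.decode₂_encode] using hi⟩

lemma of_countable_open_cover {ι : Type*} [Countable ι] {U : ι → Set X}
    (hU : ∀ i, IsOpen (U i)) (hcover : ⋃ i, U i = univ)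
    (hq : ∀ i, HasQuasiGDeltaDiagonal (U i)) : HasQuasiGDeltaDiagonal X := by
  choose 𝒢 h𝒢open h𝒢sep using hq
  let F : ι × Option ℕ → Set (Set X)
    | (i, none) => {U i}
    | (i, some n) => (Subtype.val '' ·) '' 𝒢 i n
  refine of_countable (𝒢 := F) ?_ fun x y hxy => ?_
  · rintro ⟨i, _ | n⟩ G hG
    · exact (mem_singleton_iff.1 hG) ▸ hU i
    · obtain ⟨G, hG, rfl⟩ := hG
      exact (hU i).isOpenMap_subtype_val G (h𝒢open i n G hG)
  obtain ⟨i, hxi⟩ := mem_iUnion.1 (hcover.symm ▸ mem_univ x)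
  by_cases hyi : y ∈ U i
  · obtain ⟨n, hx, hsub⟩ := h𝒢sep i ⟨x, hxi⟩ ⟨y, hyi⟩ (by simpa using hxy)
    refine ⟨(i, some n), ?_⟩
    simp only [F, star'_image_val hxi]
    refine ⟨⟨_, hx, rfl⟩, ?_⟩
    rintro _ ⟨z, hz, rfl⟩ rfl
    exact hsub hz rfl
  · refine ⟨(i, none), ?_⟩
    simp only [F, star'_singleton hxi]
    exact ⟨hxi, fun z hz hzy => hyi (hzy ▸ hz)⟩

end HasQuasiGDeltaDiagonal

theorem lindelof_locally_quasiGDeltaDiagonal {X : Type*} [TopologicalSpace X]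
    [LindelofSpace X]
    (h : ∀ x : X, ∃ U : Set X, IsOpen U ∧ x ∈ U ∧ HasQuasiGDeltaDiagonal ↥U) :
    HasQuasiGDeltaDiagonal X := by
  choose U hUopen hxU hUq using h
  obtain ⟨t, htc, htcover⟩ :=
    LindelofSpace.elim_nhds_subcover U fun x => (hUopen x).mem_nhds (hxU x)
  have := htc.to_subtype
  exact .of_countable_open_cover (fun x : t => hUopen x)
    (by rwa [iUnion_subtype]) (fun x => hUq x)
end

section
/- Every countably compact Hausdorff D-space is compact. -/
/-!
Refine an open cover to the neighborhood assignment sending each point to a member containing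
it. The D-property yields a closed discrete set `D` whose assigned members cover `X`, and `D` is
finite because, being closed, it is countably compact, and an infinite countably compact set has
an accumulation point in itself, which a discrete set cannot have.
-/

open Topology Set

/-- `X` is a D-space: for every neighborhood assignment `φ` there is a closed discrete
set `D` with `X = ⋃_{d ∈ D} φ d`. -/
def IsDSpace (X : Type*) [TopologicalSpace X] : Prop :=
  ∀ φ : X → Set X, (∀ x, IsOpen (φ x) ∧ x ∈ φ x) →
    ∃ D : Set X, IsClosed D ∧ DiscreteTopology ↥D ∧ ⋃ d ∈ D, φ d = univ

theorem IsCountablyCompact.finite_of_isDiscrete {X : Type*} [TopologicalSpace X] {A : Set X}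
    (hA : IsCountablyCompact A) (hAd : IsDiscrete A) : A.Finite := by
  by_contra hinf
  obtain ⟨a, ha, hacc⟩ := hA.exists_accPt_of_infinite subset_rfl hinf
  obtain ⟨U, hU, hUA⟩ := disjoint_nhdsWithin_of_mem_discrete hAd ha
  exact hacc.ne <| disjoint_iff.mp <|
    Filter.disjoint_of_disjoint_of_mem hUA hU (Filter.mem_principal_self A)

theorem IsDSpace.compactSpace {X : Type*} [TopologicalSpace X] [CountablyCompactSpace X]
    (hX : IsDSpace X) : CompactSpace X := by
  classical
  refine ⟨isCompact_of_finite_subcover fun U hUo hcov => ?_⟩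
  choose i hi using fun x => mem_iUnion.mp (hcov (mem_univ x))
  obtain ⟨D, hDc, hDd, hDcov⟩ := hX (fun x => U (i x)) fun x => ⟨hUo _, hi x⟩
  have hDfin : D.Finite := hDc.isCountablyCompact.finite_of_isDiscrete ⟨hDd⟩
  refine ⟨hDfin.toFinset.image i, ?_⟩
  rw [← hDcov, Finset.set_biUnion_finset_image]
  simp

theorem countablyCompact_dSpace_compact_general {X : Type*} [TopologicalSpace X]
    (hcc : ∀ U : ℕ → Set X, (∀ n, IsOpen (U n)) → (⋃ n, U n) = univ →
      ∃ s : Finset ℕ, (⋃ n ∈ s, U n) = univ)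
    (hD : IsDSpace X) : CompactSpace X := by
  have : CountablyCompactSpace X := ⟨isCountablyCompact_iff_countable_open_cover.mpr
    fun U hUo hU => by simpa only [univ_subset_iff] using hcc U hUo (univ_subset_iff.mp hU)⟩
  exact hD.compactSpace

theorem countablyCompact_dSpace_compact {X : Type*} [TopologicalSpace X] [T2Space X]
    (hcc : ∀ U : ℕ → Set X, (∀ n, IsOpen (U n)) → (⋃ n, U n) = univ →
      ∃ s : Finset ℕ, (⋃ n ∈ s, U n) = univ)
    (hD : IsDSpace X) : CompactSpace X :=
  countablyCompact_dSpace_compact_general hcc hD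
end

section
/- Let G be a non-locally compact topological group with a Hausdorff compactification bG, and write Y = bG \ G = Y₁ ∪ Y₂ where both Y₁ and Y₂ have countable pseudocharacter (every singleton is a Gδ-set). If at most one of Y₁, Y₂ is dense in bG, then either G is a paracompact p-space or Y is first-countable at some point. -/
/-!
The remainder `Y` is dense in `bG` because `G` is nowhere locally compact. If, say, `Y₁` is not
dense, the open set `bG \ closure Y₁` meets `Y` only in points of `Y₂`; the countable
pseudocharacter of `Y₂` then gives `y ∈ Y` and a Gδ-set `S` of `bG` with `Y ∩ S = {y}`. Urysohn
functions shrink `S` to a closed Gδ-set `K ∋ y`, and in a compact space a closed Gδ-set has a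
countable neighbourhood base. If `K = {y}`, the point `y` has countable character. Otherwise,
cutting `y` off `K` leaves a nonempty compact `C ⊆ G` with a countable neighbourhood base, i.e. `G`
has countable type. Symmetric neighbourhoods `V n` of `1` with `V (n + 1) * V (n + 1) ⊆ V n`,
chosen inside the neighbourhoods of a translate of `C`, cut out a compact subgroup `H = ⋂ n, V n`
with a countable neighbourhood base. The entourages `{(xH, yH) | x⁻¹ * y ∈ O}`, `O ⊇ H` open, make
`G ⧸ H` a uniform space with countably generated uniformity, so `G ⧸ H` is metrizable, and `G` is
paracompact as the preimage of a metrizable space under the perfect map `G → G ⧸ H`.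
-/

open Topology Set Function

/-- `G` is a paracompact p-space: paracompact and admits a perfect map onto a
metrizable space. -/
def IsParacompactPSpace (G : Type u) [TopologicalSpace G] : Prop :=
  ParacompactSpace G ∧ ∃ (M : Type u) (_ : MetricSpace M) (f : G → M),
    Continuous f ∧ IsClosedMap f ∧ Surjective f ∧ ∀ m : M, IsCompact (f ⁻¹' {m})

open Filter Pointwise

theorem IsProperMap.paracompactSpace {X Y : Type*} [TopologicalSpace X] [TopologicalSpace Y]
    [ParacompactSpace Y] {f : X → Y} (hf : IsProperMap f) : ParacompactSpace X := by
  refine ⟨fun α s hso hcov => ?_⟩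
  have hfib : ∀ y, ∃ t : Finset α, f ⁻¹' {y} ⊆ ⋃ i ∈ t, s i := fun y =>
    (hf.isCompact_preimage isCompact_singleton).elim_finite_subcover s hso (hcov ▸ subset_univ _)
  choose t ht using hfib
  -- `W y` is the largest open set whose preimage is covered by the sets `s i`, `i ∈ t y`
  let W : Y → Set Y := fun y => (f '' (⋃ i ∈ t y, s i)ᶜ)ᶜ
  have hWo : ∀ y, IsOpen (W y) := fun y =>
    (hf.isClosedMap _ (isOpen_biUnion fun i _ => hso i).isClosed_compl).isOpen_compl
  have hWy : ∀ y, y ∈ W y := by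
    rintro y ⟨x, hx, rfl⟩
    exact hx (ht _ rfl)
  have hfW : ∀ y, f ⁻¹' W y ⊆ ⋃ i ∈ t y, s i := fun y x hx => by_contra fun h => hx ⟨x, h, rfl⟩
  obtain ⟨r, hro, hrcov, hrlf, hrW⟩ :=
    precise_refinement W hWo (iUnion_eq_univ_iff.2 fun y => ⟨y, hWy y⟩)
  let g : (Σ y, t y) → Set X := fun p => f ⁻¹' r p.1 ∩ s p.2
  have hglf : LocallyFinite g := by
    intro x
    obtain ⟨N, hN, hNfin⟩ := hrlf (f x)
    refine ⟨f ⁻¹' N, hf.continuous.continuousAt.preimage_mem_nhds hN,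
      (hNfin.preimage' (f := Sigma.fst) fun y _ => (finite_range (Sigma.mk y)).subset ?_).subset ?_⟩
    · rintro ⟨y', i⟩ rfl
      exact ⟨i, rfl⟩
    · rintro ⟨y, i⟩ ⟨z, ⟨hzr, -⟩, hzN⟩
      exact ⟨f z, hzr, hzN⟩
  refine ⟨range g, (↑), ?_, ?_, hglf.on_range, ?_⟩
  · rintro ⟨-, p, rfl⟩
    exact ((hro p.1).preimage hf.continuous).inter (hso p.2)
  · refine iUnion_eq_univ_iff.2 fun x => ?_
    obtain ⟨y, hy⟩ := iUnion_eq_univ_iff.1 hrcov (f x)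
    obtain ⟨i, hi, hxi⟩ := mem_iUnion₂.1 (hfW y (hrW y hy))
    exact ⟨⟨_, ⟨y, i, hi⟩, rfl⟩, hy, hxi⟩
  · rintro ⟨-, p, rfl⟩
    exact ⟨p.2, inter_subset_right⟩

theorem IsCompact.ultrafilter_le_nhds_of_le_nhdsSet {X : Type*} [TopologicalSpace X] {K : Set X}
    (hK : IsCompact K) (f : Ultrafilter X) (hf : ↑f ≤ 𝓝ˢ K) : ∃ x ∈ K, ↑f ≤ 𝓝 x := by
  by_contra! h
  have hdisj : Disjoint (𝓝ˢ K) f :=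
    hK.disjoint_nhdsSet_left.2 fun x hx => (f.disjoint_iff_not_le.2 (h x hx)).symm
  exact f.neBot.ne (disjoint_self.1 (hdisj.mono_left hf))

theorem IsGδ.exists_isClosed_isGδ_between {X : Type*} [TopologicalSpace X] [NormalSpace X]
    {F S : Set X} (hS : IsGδ S) (hF : IsClosed F) (hFS : F ⊆ S) :
    ∃ K, IsClosed K ∧ IsGδ K ∧ F ⊆ K ∧ K ⊆ S := by
  obtain ⟨U, hUo, rfl⟩ := isGδ_iff_eq_iInter_nat.1 hS
  have hZ : ∀ n, ∃ Z, IsClosed Z ∧ IsGδ Z ∧ F ⊆ Z ∧ Z ⊆ U n := fun n => by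
    obtain ⟨f, hfF, hfU, -⟩ := exists_continuous_zero_one_of_isClosed hF (hUo n).isClosed_compl
      (disjoint_compl_right_iff_subset.2 (hFS.trans (iInter_subset _ n)))
    refine ⟨f ⁻¹' {0}, isClosed_singleton.preimage f.continuous,
      isClosed_singleton.isGδ.preimage f.continuous, fun x hx => hfF hx,
      fun x hx => by_contra fun h => ?_⟩
    exact zero_ne_one ((hx : f x = 0).symm.trans (hfU h))
  choose Z hZc hZδ hFZ hZU using hZ
  exact ⟨⋂ n, Z n, isClosed_iInter hZc, .iInter hZδ, subset_iInter hFZ, iInter_mono hZU⟩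

theorem IsGδ.isCountablyGenerated_nhdsSet {X : Type*} [TopologicalSpace X] [CompactSpace X]
    [NormalSpace X] {F : Set X} (hδ : IsGδ F) (hF : IsClosed F) : (𝓝ˢ F).IsCountablyGenerated := by
  obtain ⟨U, hUo, rfl⟩ := isGδ_iff_eq_iInter_nat.1 hδ
  choose W hWo hFW hWU using fun n => normal_exists_closure_subset hF (hUo n) (iInter_subset _ n)
  have : 𝓝ˢ (⋂ n, U n) = ⨅ n, 𝓟 (W n) := by
    refine le_antisymm (le_iInf fun n => le_principal_iff.2 ((hWo n).mem_nhdsSet.2 (hFW n))) ?_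
    refine isCompact_univ.le_nhdsSet_of_clusterPt univ_mem fun x _ hx => mem_iInter.2 fun n => ?_
    exact hWU n (hx.mem_closure_of_mem _ (mem_iInf_of_mem n (mem_principal_self _)))
  rw [this]
  exact isCountablyGenerated_seq _

theorem isCountablyGenerated_nhds_or_exists_compact_disjoint {X : Type*} [TopologicalSpace X]
    [CompactSpace X] [NormalSpace X] [T1Space X] {Y S : Set X} {y : X} (hS : IsGδ S)
    (hYS : Y ∩ S = {y}) :
    (𝓝 y).IsCountablyGenerated ∨
      ∃ C : Set X, IsCompact C ∧ C.Nonempty ∧ Disjoint C Y ∧ (𝓝ˢ C).IsCountablyGenerated := by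
  have hyS : y ∈ S := (hYS.ge rfl).2
  obtain ⟨K, hKc, hKδ, hyK, hKS⟩ :=
    hS.exists_isClosed_isGδ_between isClosed_singleton (singleton_subset_iff.2 hyS)
  by_cases hK : K ⊆ {y}
  · left
    have := hKδ.isCountablyGenerated_nhdsSet hKc
    rwa [hK.antisymm hyK, nhdsSet_singleton] at this
  · right
    obtain ⟨z, hzK, hzy⟩ := not_subset.1 hK
    obtain ⟨Z, hZc, hZδ, hzZ, hZy⟩ := isOpen_compl_singleton.isGδ.exists_isClosed_isGδ_between
      isClosed_singleton (singleton_subset_iff.2 hzy)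
    refine ⟨K ∩ Z, (hKc.inter hZc).isCompact, ⟨z, hzK, hzZ rfl⟩, ?_,
      (hKδ.inter hZδ).isCountablyGenerated_nhdsSet (hKc.inter hZc)⟩
    refine disjoint_left.2 fun w ⟨hwK, hwZ⟩ hwY => hZy hwZ ?_
    rw [← hYS]
    exact ⟨hwY, hKS hwK⟩

theorem Topology.IsInducing.isCountablyGenerated_nhdsSet_preimage {X Y : Type*}
    [TopologicalSpace X] [TopologicalSpace Y] {f : X → Y} (hf : IsInducing f) {K : Set Y}
    (hK : K ⊆ range f) [(𝓝ˢ K).IsCountablyGenerated] : (𝓝ˢ (f ⁻¹' K)).IsCountablyGenerated := by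
  rw [hf.nhdsSet_eq_comap, image_preimage_eq_of_subset hK]
  infer_instance

theorem tendsto_mul_nhdsSet_prod {M : Type*} [TopologicalSpace M] [Mul M] [ContinuousMul M]
    {K L : Set M} (hK : IsCompact K) (hL : IsCompact L) :
    Tendsto (fun p : M × M => p.1 * p.2) (𝓝ˢ K ×ˢ 𝓝ˢ L) (𝓝ˢ (K * L)) := by
  rw [← hK.nhdsSet_prod_eq hL]
  exact continuous_mul.tendsto_nhdsSet fun p hp => mul_mem_mul hp.1 hp.2

section CosetUniformity

variable {G : Type*} [Group G] [TopologicalSpace G] {H : Subgroup G}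

variable (H) in
def cosetUniformity : Filter ((G ⧸ H) × (G ⧸ H)) :=
  map (Prod.map (↑) (↑)) (comap (fun p : G × G => p.1⁻¹ * p.2) (𝓝ˢ (H : Set G)))

theorem hasBasis_cosetUniformity : (cosetUniformity H).HasBasis (· ∈ 𝓝ˢ (H : Set G))
    fun O => Prod.map (↑) (↑) '' {p : G × G | p.1⁻¹ * p.2 ∈ O} :=
  ((𝓝ˢ (H : Set G)).basis_sets.comap _).map _

variable [IsTopologicalGroup G]

theorem Subgroup.exists_mem_nhdsSet_mul_subset (hH : IsCompact (H : Set G)) {O : Set G}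
    (hO : O ∈ 𝓝ˢ (H : Set G)) : ∃ W ∈ 𝓝ˢ (H : Set G), W * W ⊆ O := by
  have := tendsto_mul_nhdsSet_prod hH hH (by rwa [coe_mul_coe])
  obtain ⟨W, hW, hWO⟩ := mem_prod_self_iff.1 this
  exact ⟨W, hW, by rintro _ ⟨a, ha, b, hb, rfl⟩; exact hWO (mk_mem_prod ha hb)⟩

theorem tendsto_swap_cosetUniformity :
    Tendsto Prod.swap (cosetUniformity H) (cosetUniformity H) := by
  refine hasBasis_cosetUniformity.tendsto_iff hasBasis_cosetUniformity |>.2 fun O hO => ?_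
  refine ⟨O⁻¹, continuous_inv.tendsto_nhdsSet (fun x hx => H.inv_mem hx) hO, ?_⟩
  rintro _ ⟨⟨x, y⟩, hxy, rfl⟩
  exact ⟨(y, x), by simpa using hxy, rfl⟩

theorem cosetUniformity_lift'_comp_le (hH : IsCompact (H : Set G)) :
    (cosetUniformity H).lift' (fun s => SetRel.comp s s) ≤ cosetUniformity H := by
  intro s hs
  obtain ⟨O, hO, hOs⟩ := hasBasis_cosetUniformity.mem_iff.1 hs
  obtain ⟨W, hW, hWO⟩ := H.exists_mem_nhdsSet_mul_subset hH hO
  obtain ⟨W', hW', hW'W⟩ := H.exists_mem_nhdsSet_mul_subset hH hW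
  have hHW' : (H : Set G) ⊆ W' := subset_of_mem_nhdsSet hW'
  refine mem_of_superset (mem_lift' (hasBasis_cosetUniformity.mem_of_mem hW')) ?_
  rintro ⟨a, c⟩ ⟨b, ⟨⟨x, y⟩, hxy, hab⟩, ⟨⟨y', z⟩, hyz, hbc⟩⟩
  simp only [Prod.map, Prod.mk.injEq] at hab hbc
  obtain ⟨rfl, rfl⟩ := hab
  obtain ⟨hyy', rfl⟩ := hbc
  have hW'sub : W' ⊆ W := (subset_mul_left _ (hHW' H.one_mem)).trans hW'W
  have hmem : x⁻¹ * z ∈ W * W := by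
    have hy : y⁻¹ * y' ∈ W' := hHW' (by simpa using H.inv_mem (QuotientGroup.eq.1 hyy'))
    have := mul_mem_mul (hW'sub hxy) (hW'W (mul_mem_mul hy hyz))
    simpa [mul_assoc] using this
  exact hOs ⟨(x, z), hWO hmem, rfl⟩

theorem nhds_eq_comap_cosetUniformity (hH : IsCompact (H : Set G)) (a : G ⧸ H) :
    𝓝 a = comap (Prod.mk a) (cosetUniformity H) := by
  obtain ⟨x, rfl⟩ := QuotientGroup.mk_surjective a
  ext s
  rw [(hasBasis_cosetUniformity.comap _).mem_iff]
  constructor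
  · intro hs
    have hB : {g : G | ((x * g : G) : G ⧸ H) ∈ s} ∈ 𝓝ˢ (H : Set G) :=
      mem_nhdsSet_iff_forall.2 fun h hh =>
        (QuotientGroup.continuous_mk.comp (continuous_const_mul x)).continuousAt.preimage_mem_nhds
          (by rwa [Function.comp_apply, QuotientGroup.mk_mul_of_mem x hh])
    obtain ⟨W, hW, hWB⟩ := H.exists_mem_nhdsSet_mul_subset hH hB
    refine ⟨W, hW, ?_⟩
    rintro _ ⟨⟨y, z⟩, hyz, hxz⟩
    simp only [Prod.map, Prod.mk.injEq] at hxz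
    obtain ⟨hxy, rfl⟩ := hxz
    have hmem : x⁻¹ * z ∈ W * W := by
      have hx : x⁻¹ * y ∈ W := subset_of_mem_nhdsSet hW (QuotientGroup.eq.1 hxy.symm)
      simpa [mul_assoc] using mul_mem_mul hx (show y⁻¹ * z ∈ W from hyz)
    simpa using hWB hmem
  · rintro ⟨O, hO, hOs⟩
    rw [QuotientGroup.nhds_eq, mem_map]
    have : {z : G | x⁻¹ * z ∈ O} ∈ 𝓝 x :=
      (continuous_const_mul x⁻¹).continuousAt.preimage_mem_nhds
        (by simpa using nhds_le_nhdsSet H.one_mem hO)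
    exact mem_of_superset this fun z hz => hOs ⟨(x, z), hz, rfl⟩

theorem QuotientGroup.metrizableSpace_of_isCompact (hH : IsCompact (H : Set G))
    (hHc : IsClosed (H : Set G)) [(𝓝ˢ (H : Set G)).IsCountablyGenerated] :
    TopologicalSpace.MetrizableSpace (G ⧸ H) := by
  let _ : UniformSpace (G ⧸ H) :=
    { toTopologicalSpace := QuotientGroup.instTopologicalSpace H
      uniformity := cosetUniformity H
      symm := tendsto_swap_cosetUniformity
      comp := cosetUniformity_lift'_comp_le hH
      nhds_eq_comap_uniformity := nhds_eq_comap_cosetUniformity hH }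
  have : (uniformity (G ⧸ H)).IsCountablyGenerated := by
    change (cosetUniformity H).IsCountablyGenerated
    unfold cosetUniformity
    infer_instance
  have : T1Space (G ⧸ H) := QuotientGroup.t1Space_iff.2 hHc
  exact UniformSpace.metrizableSpace

end CosetUniformity

theorem isParacompactPSpace_of_compact_subgroup {G : Type u} [TopologicalSpace G] [Group G]
    [IsTopologicalGroup G] (H : Subgroup G) (hH : IsCompact (H : Set G))
    (hHc : IsClosed (H : Set G)) [(𝓝ˢ (H : Set G)).IsCountablyGenerated] :
    IsParacompactPSpace G := by
  have := QuotientGroup.metrizableSpace_of_isCompact hH hHc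
  let _ := TopologicalSpace.metrizableSpaceMetric (G ⧸ H)
  have hq : IsProperMap ((↑) : G → G ⧸ H) := by
    refine isProperMap_iff_isClosedMap_and_compact_fibers.2
      ⟨QuotientGroup.continuous_mk, QuotientGroup.isClosedMap_coe hH, fun y => ?_⟩
    obtain ⟨x, rfl⟩ := QuotientGroup.mk_surjective y
    rw [← image_singleton, QuotientGroup.preimage_image_mk_eq_mul]
    exact isCompact_singleton.mul hH
  exact ⟨hq.paracompactSpace, G ⧸ H, inferInstance, (↑), hq.continuous, hq.isClosedMap,
    QuotientGroup.mk_surjective, fun _ => hq.isCompact_preimage isCompact_singleton⟩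

section CompactSubgroup

variable {G : Type*} [TopologicalSpace G] [Group G] [IsTopologicalGroup G]

theorem exists_open_symmetric_mul_subset {S : Set G} (hS : S ∈ 𝓝 (1 : G)) :
    ∃ T : Set G, IsOpen T ∧ (1 : G) ∈ T ∧ T⁻¹ = T ∧ T * T ⊆ S := by
  obtain ⟨V, hVo, hV1, hVS⟩ := exists_open_nhds_one_mul_subset hS
  refine ⟨V ∩ V⁻¹, hVo.inter hVo.inv, ⟨hV1, by simpa using hV1⟩, by simp [inter_comm], ?_⟩
  exact (mul_subset_mul inter_subset_left inter_subset_left).trans hVS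

theorem exists_seq_symmetric_nhds_one (N : ℕ → Set G) (hN : ∀ n, N n ∈ 𝓝 (1 : G)) :
    ∃ V : ℕ → Set G, (∀ n, IsOpen (V n)) ∧ (∀ n, (1 : G) ∈ V n) ∧ (∀ n, (V n)⁻¹ = V n) ∧
      (∀ n, V (n + 1) * V (n + 1) ⊆ V n) ∧ ∀ n, V n ⊆ N n := by
  choose! T hTo hT1 hTinv hTmul using fun S (hS : S ∈ 𝓝 (1 : G)) =>
    exists_open_symmetric_mul_subset hS
  let S : ℕ → Set G := fun n => Nat.rec (N 0) (fun k W => T W ∩ N (k + 1)) n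
  have hS : ∀ n, S n ∈ 𝓝 (1 : G) := by
    intro n
    induction n with
    | zero => exact hN 0
    | succ k ih => exact inter_mem ((hTo _ ih).mem_nhds (hT1 _ ih)) (hN _)
  have hSN : ∀ n, S n ⊆ N n := by
    rintro (_ | n)
    exacts [subset_rfl, inter_subset_right]
  refine ⟨fun n => T (S n), fun n => hTo _ (hS n), fun n => hT1 _ (hS n),
    fun n => hTinv _ (hS n), fun n => (hTmul (S (n + 1)) (hS (n + 1))).trans inter_subset_left,
    fun n => ?_⟩
  exact (subset_mul_left _ (hT1 _ (hS n))).trans ((hTmul _ (hS n)).trans (hSN n))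

theorem exists_compact_subgroup_of_isCountablyGenerated_nhdsSet {C : Set G} (hC : IsCompact C)
    (h1 : (1 : G) ∈ C) [(𝓝ˢ C).IsCountablyGenerated] :
    ∃ H : Subgroup G, IsCompact (H : Set G) ∧ IsClosed (H : Set G) ∧
      (𝓝ˢ (H : Set G)).IsCountablyGenerated := by
  obtain ⟨N, hN⟩ := (𝓝ˢ C).exists_antitone_basis
  obtain ⟨V, hVo, hV1, hVinv, hVmul, hVN⟩ :=
    exists_seq_symmetric_nhds_one N fun n => nhds_le_nhdsSet h1 (hN.mem n)
  have hVcl : ∀ n, closure (V (n + 1)) ⊆ V n := fun n =>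
    (closure_subset_mul_left_of_mem_nhds_one_of_inv _ ((hVo _).mem_nhds (hV1 _))
      fun x hx => hVinv (n + 1) ▸ inv_mem_inv.2 hx).trans (hVmul n)
  let H : Subgroup G :=
    { carrier := ⋂ n, V n
      one_mem' := mem_iInter.2 hV1
      mul_mem' := fun ha hb => mem_iInter.2 fun n =>
        hVmul n (mul_mem_mul (mem_iInter.1 ha _) (mem_iInter.1 hb _))
      inv_mem' := fun ha => mem_iInter.2 fun n => hVinv n ▸ inv_mem_inv.2 (mem_iInter.1 ha n) }
  have hlC : ⨅ n, 𝓟 (V n) ≤ 𝓝ˢ C :=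
    hN.ge_iff.2 fun n _ => mem_iInf_of_mem n (mem_principal.2 (hVN n))
  have hconv : ∀ f : Ultrafilter G, ↑f ≤ ⨅ n, 𝓟 (V n) → ∃ x ∈ (H : Set G), ↑f ≤ 𝓝 x := by
    intro f hf
    obtain ⟨x, -, hx⟩ := hC.ultrafilter_le_nhds_of_le_nhdsSet f (hf.trans hlC)
    refine ⟨x, mem_iInter.2 fun n => hVcl n ?_, hx⟩
    exact mem_closure_iff_ultrafilter.2 ⟨f, hf (mem_iInf_of_mem (n + 1) (mem_principal_self _)), hx⟩
  have hHl : ⨅ n, 𝓟 (V n) ≤ 𝓝ˢ (H : Set G) := le_iff_ultrafilter.2 fun f hf =>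
    let ⟨_, hx, hfx⟩ := hconv f hf
    hfx.trans (nhds_le_nhdsSet hx)
  have hlH : 𝓟 (H : Set G) ≤ ⨅ n, 𝓟 (V n) := le_iInf fun n => principal_mono.2 (iInter_subset _ n)
  refine ⟨H, isCompact_iff_ultrafilter_le_nhds.2 fun f hf => hconv f (hf.trans hlH),
    isClosed_of_closure_subset fun x hx => mem_iInter.2 fun n => hVcl n (closure_mono
      (iInter_subset _ _) hx), ?_⟩
  have hHeq : 𝓝ˢ (H : Set G) = ⨅ n, 𝓟 (V n) := le_antisymm
    (le_iInf fun n => le_principal_iff.2 ((hVo n).mem_nhdsSet.2 (iInter_subset _ n))) hHl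
  rw [hHeq]
  exact isCountablyGenerated_seq _

end CompactSubgroup

theorem dense_compl_range_of_not_locallyCompactSpace {G X : Type*} [TopologicalSpace G] [Group G]
    [IsTopologicalGroup G] [TopologicalSpace X] [LocallyCompactSpace X] {e : G → X}
    (he : IsInducing e) (hG : ¬ LocallyCompactSpace G) : Dense (range e)ᶜ := by
  rw [← interior_eq_empty_iff_dense_compl, ← not_nonempty_iff_eq_empty]
  rintro ⟨_, hx⟩
  obtain ⟨g, rfl⟩ := interior_subset hx
  obtain ⟨K, hKn, hKsub, hK⟩ := local_compact_nhds (isOpen_interior.mem_nhds hx)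
  have hKe : IsCompact (e ⁻¹' K) := he.isCompact_preimage' hK (hKsub.trans interior_subset)
  exact hG (hKe.locallyCompactSpace_of_mem_nhds_of_group
    (he.continuous.continuousAt.preimage_mem_nhds hKn))

theorem exists_mem_isGδ_inter_eq_singleton {X : Type*} [TopologicalSpace X] {Y₁ Y₂ : Set X}
    (hd : Dense (Y₁ ∪ Y₂)) (h₁ : ¬ Dense Y₁)
    (h₂ : ∀ y ∈ Y₂, ∃ U : ℕ → Set X, (∀ n, IsOpen (U n)) ∧ Y₂ ∩ ⋂ n, U n = {y}) :
    ∃ y ∈ Y₁ ∪ Y₂, ∃ S, IsGδ S ∧ (Y₁ ∪ Y₂) ∩ S = {y} := by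
  have hW : IsOpen (closure Y₁)ᶜ := isClosed_closure.isOpen_compl
  obtain ⟨y, hyW, hyY⟩ := hd.inter_open_nonempty _ hW
    (by rwa [nonempty_compl, Ne, ← dense_iff_closure_eq])
  obtain ⟨U, hUo, hU⟩ := h₂ y (hyY.resolve_left fun h => hyW (subset_closure h))
  refine ⟨y, hyY, (closure Y₁)ᶜ ∩ ⋂ n, U n, hW.isGδ.inter (.iInter_of_isOpen hUo), ?_⟩
  ext z
  constructor
  · rintro ⟨hz, hzW, hzU⟩
    rw [← hU]
    exact ⟨hz.resolve_left fun h => hzW (subset_closure h), hzU⟩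
  · rintro rfl
    exact ⟨hyY, hyW, (hU.ge rfl).2⟩

theorem remainder_union_countable_pseudocharacter_general
    {G bG : Type u} [TopologicalSpace G] [Group G] [IsTopologicalGroup G]
    [TopologicalSpace bG] [CompactSpace bG] [T2Space bG]
    (e : G → bG) (he : Topology.IsEmbedding e)
    (hnlc : ¬ LocallyCompactSpace G)
    (Y₁ Y₂ : Set bG) (hY : (Set.range e)ᶜ = Y₁ ∪ Y₂)
    -- `Y₁` and `Y₂` have countable pseudocharacter (as subspaces)
    (h₁ : ∀ y ∈ Y₁, ∃ U : ℕ → Set bG, (∀ n, IsOpen (U n)) ∧ Y₁ ∩ ⋂ n, U n = {y})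
    (h₂ : ∀ y ∈ Y₂, ∃ U : ℕ → Set bG, (∀ n, IsOpen (U n)) ∧ Y₂ ∩ ⋂ n, U n = {y})
    -- at most one of `Y₁`, `Y₂` is dense in `bG`
    (hdense : ¬ (Dense Y₁ ∧ Dense Y₂)) :
    IsParacompactPSpace G ∨
      ∃ y : ↥(Set.range e)ᶜ, (𝓝 y).IsCountablyGenerated := by
  obtain ⟨y, hyY, S, hS, hYS⟩ : ∃ y ∈ (range e)ᶜ, ∃ S, IsGδ S ∧ (range e)ᶜ ∩ S = {y} := by
    have hYdense := dense_compl_range_of_not_locallyCompactSpace he.isInducing hnlc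
    rw [hY] at hYdense ⊢
    rcases not_and_or.1 hdense with h | h
    · exact exists_mem_isGδ_inter_eq_singleton hYdense h h₂
    · rw [union_comm] at hYdense ⊢
      exact exists_mem_isGδ_inter_eq_singleton hYdense h h₁
  rcases isCountablyGenerated_nhds_or_exists_compact_disjoint hS hYS with
    hy | ⟨C, hC, ⟨z, hz⟩, hCY, _⟩
  · exact Or.inr ⟨⟨y, hyY⟩, by rw [nhds_subtype]; infer_instance⟩
  · have hCe : C ⊆ range e := disjoint_compl_right_iff_subset.1 hCY
    obtain ⟨g, rfl⟩ := hCe hz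
    have hφ : IsInducing (e ∘ (g * ·)) := he.isInducing.comp (Homeomorph.mulLeft g).isInducing
    have hCφ : C ⊆ range (e ∘ (g * ·)) := by
      rwa [(mul_left_surjective g).range_comp]
    have := hφ.isCountablyGenerated_nhdsSet_preimage hCφ
    obtain ⟨H, hH, hHc, _⟩ := exists_compact_subgroup_of_isCountablyGenerated_nhdsSet
      (hφ.isCompact_preimage' hC hCφ) (by simpa using hz)
    exact Or.inl (isParacompactPSpace_of_compact_subgroup H hH hHc)

theorem remainder_union_countable_pseudocharacter
    {G bG : Type u} [TopologicalSpace G] [Group G] [IsTopologicalGroup G]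
    [TopologicalSpace bG] [CompactSpace bG] [T2Space bG]
    (e : G → bG) (he : Topology.IsEmbedding e) (hd : DenseRange e)
    (hnlc : ¬ LocallyCompactSpace G)
    (Y₁ Y₂ : Set bG) (hY : (Set.range e)ᶜ = Y₁ ∪ Y₂)
    -- `Y₁` and `Y₂` have countable pseudocharacter (as subspaces)
    (h₁ : ∀ y ∈ Y₁, ∃ U : ℕ → Set bG, (∀ n, IsOpen (U n)) ∧ Y₁ ∩ ⋂ n, U n = {y})
    (h₂ : ∀ y ∈ Y₂, ∃ U : ℕ → Set bG, (∀ n, IsOpen (U n)) ∧ Y₂ ∩ ⋂ n, U n = {y})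
    -- at most one of `Y₁`, `Y₂` is dense in `bG`
    (hdense : ¬ (Dense Y₁ ∧ Dense Y₂)) :
    IsParacompactPSpace G ∨
      ∃ y : ↥(Set.range e)ᶜ, (𝓝 y).IsCountablyGenerated :=
  remainder_union_countable_pseudocharacter_general e he hnlc Y₁ Y₂ hY h₁ h₂ hdense
end

section
/- Let X be a Hausdorff p-space with Hausdorff compactification bX in which every compact subset of the remainder bX \ X is metrizable. Then there exists a Gδ-subset Y of bX containing X such that bX is first-countable at every point of Y \ X. -/
open Topology Set

/-!
Take `Y = ⋂ n, ⋃₀ 𝒰 n`. For `y ∈ Y \ X` the p-space condition makes `⋂ n, star' y (𝒰 n)` a `Gδ` set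
containing `y` and missing `X`. By regularity it contains the closure `K` of a smaller `Gδ` set
`W ∋ y`; `K` is a compact subset of the remainder, hence metrizable, so `{y}` is `Gδ` in `K` and
therefore `{y} = W ∩ V` is `Gδ` in `bX`. In a compact Hausdorff space a `Gδ` point has a countable
neighbourhood base.
-/

section Star

variable {Z : Type*}

theorem mem_star'_comm {x y : Z} {𝒢 : Set (Set Z)} : x ∈ star' y 𝒢 ↔ y ∈ star' x 𝒢 := by
  simp only [star', mem_sUnion, mem_ofPred_eq]
  exact exists_congr fun G => by tauto

theorem mem_star'_self {x : Z} {𝒢 : Set (Set Z)} : x ∈ star' x 𝒢 ↔ x ∈ ⋃₀ 𝒢 := by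
  simp only [star', mem_sUnion, mem_ofPred_eq]
  exact exists_congr fun G => by tauto

theorem isOpen_star' [TopologicalSpace Z] (x : Z) {𝒢 : Set (Set Z)} (h𝒢 : ∀ G ∈ 𝒢, IsOpen G) :
    IsOpen (star' x 𝒢) :=
  isOpen_sUnion fun G hG => h𝒢 G hG.1

/-- Every p-space is Ohio complete. -/
theorem exists_isGδ_mem_subset_compl_of_iInter_star'_subset [TopologicalSpace Z] {S : Set Z}
    {𝒰 : ℕ → Set (Set Z)} (hopen : ∀ n, ∀ U ∈ 𝒰 n, IsOpen U)
    (hstar : ∀ x ∈ S, (⋂ n, star' x (𝒰 n)) ⊆ S) {y : Z} (hy : y ∈ ⋂ n, ⋃₀ 𝒰 n) (hyS : y ∉ S) :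
    ∃ G, IsGδ G ∧ y ∈ G ∧ G ⊆ Sᶜ := by
  refine ⟨⋂ n, star' y (𝒰 n), .iInter_of_isOpen fun n => isOpen_star' y (hopen n),
    mem_iInter.2 fun n => mem_star'_self.2 (mem_iInter.1 hy n), fun x hx hxS => hyS ?_⟩
  exact hstar x hxS (mem_iInter.2 fun n => mem_star'_comm.1 (mem_iInter.1 hx n))

end Star

section GDelta

variable {X Y : Type*} [TopologicalSpace X] [TopologicalSpace Y]

theorem Topology.IsInducing.exists_isGδ_preimage_eq {f : X → Y} (hf : IsInducing f) {t : Set X}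
    (ht : IsGδ t) : ∃ V, IsGδ V ∧ f ⁻¹' V = t := by
  obtain ⟨T, hT, rfl⟩ := isGδ_iff_eq_iInter_nat.1 ht
  choose O hO hOT using fun n => hf.isOpen_iff.1 (hT n)
  exact ⟨⋂ n, O n, .iInter_of_isOpen hO, by simp only [preimage_iInter, hOT]⟩

theorem IsGδ.exists_isGδ_mem_closure_subset [RegularSpace X] {G : Set X} (hG : IsGδ G) {y : X}
    (hy : y ∈ G) : ∃ W, IsGδ W ∧ y ∈ W ∧ closure W ⊆ G := by
  obtain ⟨U, hU, rfl⟩ := isGδ_iff_eq_iInter_nat.1 hG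
  choose C hC hCclosed hCU using fun n =>
    exists_mem_nhds_isClosed_subset ((hU n).mem_nhds (mem_iInter.1 hy n))
  refine ⟨⋂ n, interior (C n), .iInter_of_isOpen fun _ => isOpen_interior,
    mem_iInter.2 fun n => mem_interior_iff_mem_nhds.2 (hC n), ?_⟩
  calc closure (⋂ n, interior (C n)) ⊆ ⋂ n, C n :=
        closure_minimal (iInter_mono fun _ => interior_subset) (isClosed_iInter hCclosed)
    _ ⊆ ⋂ n, U n := iInter_mono hCU

theorem isGδ_singleton_of_isGδ_subset_metrizableSpace {K W : Set X}
    [TopologicalSpace.MetrizableSpace K] (hW : IsGδ W) {y : X} (hy : y ∈ W) (hWK : W ⊆ K) :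
    IsGδ {y} := by
  obtain ⟨V, hV, hVy⟩ :=
    IsInducing.subtypeVal.exists_isGδ_preimage_eq (IsGδ.singleton (⟨y, hWK hy⟩ : K))
  have hyV : y ∈ V := by
    simpa using hVy.ge (mem_singleton (⟨y, hWK hy⟩ : K))
  convert hW.inter hV using 1
  refine Subset.antisymm (singleton_subset_iff.2 ⟨hy, hyV⟩) fun z ⟨hzW, hzV⟩ => ?_
  have : (⟨z, hWK hzW⟩ : K) ∈ ({⟨y, hWK hy⟩} : Set K) := hVy ▸ hzV
  exact congrArg Subtype.val (mem_singleton_iff.1 this)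

theorem isCountablyGenerated_nhds_of_isGδ_singleton [T2Space X] [LocallyCompactSpace X] {y : X}
    (hy : IsGδ {y}) : (𝓝 y).IsCountablyGenerated := by
  obtain ⟨U, hU, hUy⟩ := isGδ_iff_eq_iInter_nat.1 hy
  have hyU : ∀ n, U n ∈ 𝓝 y := fun n => (hU n).mem_nhds (mem_iInter.1 (hUy ▸ rfl) n)
  choose D hD hDU hDc using fun n => local_compact_nhds (hyU n)
  -- the compact sets `E s` shrink to `{y}`, so they form a countable neighbourhood base at `y`
  let E : Finset ℕ → Set X := fun s => D 0 ∩ ⋂ n ∈ s, D n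
  have hE : ∀ s, E s ∈ 𝓝 y := fun s =>
    Filter.inter_mem (hD 0) ((Filter.biInter_finset_mem s).2 fun n _ => hD n)
  have hEc : ∀ s, IsCompact (E s) := fun s =>
    (hDc 0).inter_right (isClosed_biInter fun n _ => (hDc n).isClosed)
  have hEdir : Directed (· ⊇ ·) E := directed_of_isDirected_le fun s t hst =>
    inter_subset_inter_right _ (biInter_subset_biInter_left hst)
  have hEy : (⋂ s, E s) ⊆ {y} := fun z hz => hUy ▸ mem_iInter.2 fun n =>
    hDU n (by simpa [E] using (mem_iInter.1 hz {n}).2)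
  refine Filter.HasBasis.isCountablyGenerated (p := fun _ => True) (s := E) ⟨fun V => ⟨?_, ?_⟩⟩
  · intro hV
    obtain ⟨s, hs⟩ := exists_subset_nhds_of_isCompact hEdir hEc fun z hz => hEy hz ▸ hV
    exact ⟨s, trivial, hs⟩
  · rintro ⟨s, -, hs⟩
    exact Filter.mem_of_superset (hE s) hs

end GDelta

theorem pSpace_remainder_compact_metrizable_general
    {X bX : Type*}
    [TopologicalSpace bX] [CompactSpace bX] [T2Space bX]
    (e : X → bX)
    -- `X` is a p-space, witnessed in the compactification `bX`
    (hp : ∃ 𝒰 : ℕ → Set (Set bX), (∀ n, ∀ U ∈ 𝒰 n, IsOpen U) ∧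
      (∀ n, Set.range e ⊆ ⋃₀ 𝒰 n) ∧
      ∀ x ∈ Set.range e, (⋂ n, star' x (𝒰 n)) ⊆ Set.range e)
    -- every compact subset of the remainder is metrizable
    (hm : ∀ K : Set bX, K ⊆ (Set.range e)ᶜ → IsCompact K →
      TopologicalSpace.MetrizableSpace ↥K) :
    ∃ Y : Set bX, (∃ U : ℕ → Set bX, (∀ n, IsOpen (U n)) ∧ Y = ⋂ n, U n) ∧
      Set.range e ⊆ Y ∧
      ∀ y ∈ Y \ Set.range e, (𝓝 y).IsCountablyGenerated := by
  obtain ⟨𝒰, hopen, hcover, hstar⟩ := hp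
  refine ⟨⋂ n, ⋃₀ 𝒰 n, ⟨_, fun n => isOpen_sUnion (hopen n), rfl⟩,
    fun x hx => mem_iInter.2 fun n => hcover n hx, ?_⟩
  rintro y ⟨hyY, hyX⟩
  obtain ⟨G, hG, hyG, hGX⟩ :=
    exists_isGδ_mem_subset_compl_of_iInter_star'_subset hopen hstar hyY hyX
  obtain ⟨W, hW, hyW, hWG⟩ := hG.exists_isGδ_mem_closure_subset hyG
  have := hm (closure W) (hWG.trans hGX) isClosed_closure.isCompact
  exact isCountablyGenerated_nhds_of_isGδ_singleton
    (isGδ_singleton_of_isGδ_subset_metrizableSpace hW hyW subset_closure)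

theorem pSpace_remainder_compact_metrizable
    {X bX : Type*} [TopologicalSpace X] [T2Space X]
    [TopologicalSpace bX] [CompactSpace bX] [T2Space bX]
    (e : X → bX) (he : Topology.IsEmbedding e) (hd : DenseRange e)
    -- `X` is a p-space, witnessed in the compactification `bX`
    (hp : ∃ 𝒰 : ℕ → Set (Set bX), (∀ n, ∀ U ∈ 𝒰 n, IsOpen U) ∧
      (∀ n, Set.range e ⊆ ⋃₀ 𝒰 n) ∧
      ∀ x ∈ Set.range e, (⋂ n, star' x (𝒰 n)) ⊆ Set.range e)
    -- every compact subset of the remainder is metrizable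
    (hm : ∀ K : Set bX, K ⊆ (Set.range e)ᶜ → IsCompact K →
      TopologicalSpace.MetrizableSpace ↥K) :
    ∃ Y : Set bX, (∃ U : ℕ → Set bX, (∀ n, IsOpen (U n)) ∧ Y = ⋂ n, U n) ∧
      Set.range e ⊆ Y ∧
      ∀ y ∈ Y \ Set.range e, (𝓝 y).IsCountablyGenerated :=
  pSpace_remainder_compact_metrizable_general e hp hm
end

section
/- Every paracompact Hausdorff space with a base of countable order is metrizable. -/
open Topology Set

/-- `X` has a base of countable order. -/
def HasBCO (X : Type*) [TopologicalSpace X] : Prop :=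
  ∃ ℬ : ℕ → Set (Set X),
    (∀ n, ∀ B ∈ ℬ n, IsOpen B) ∧
    (∀ n, ∀ U : Set X, IsOpen U → ∀ x ∈ U, ∃ B ∈ ℬ n, x ∈ B ∧ B ⊆ U) ∧
    ∀ (x : X) (B : ℕ → Set X), (∀ n, B n ∈ ℬ n) → (∀ n, x ∈ B n) → Antitone B →
      ∀ V : Set X, IsOpen V → x ∈ V → ∃ n, B n ⊆ V

/-!
Using paracompactness, choose open covers `𝒰₀, 𝒰₁, …` such that `𝒰ₙ₊₁` star-refines
the cover by those members of the `n`-th BCO base `ℬₙ` that lie in a member of `𝒰ₙ`. At a point `x`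
the star of `x` in `𝒰ₙ₊₁` then lies in some `Bₙ ∈ ℬₙ`, and these `Bₙ` decrease, so by the BCO
property the stars form a neighbourhood base at `x`. The entourages "both points lie in a common
member of `𝒰ₙ`" then generate a uniformity with a countable base inducing the topology, and a
countably generated T₀ uniform space is metrizable.
-/

open Filter TopologicalSpace SetRel
open scoped Uniformity

section CoverStar

variable {X : Type*}

def coverStar (𝒰 : Set (Set X)) (x : X) : Set X :=
  {y | ∃ U ∈ 𝒰, x ∈ U ∧ y ∈ U}

def coverEntourage (𝒰 : Set (Set X)) : SetRel X X :=
  {p | p.2 ∈ coverStar 𝒰 p.1}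

theorem subset_coverStar {𝒰 : Set (Set X)} {U : Set X} {x : X} (hU : U ∈ 𝒰) (hx : x ∈ U) :
    U ⊆ coverStar 𝒰 x :=
  fun _ hy => ⟨U, hU, hx, hy⟩

theorem coverStar_subset_iff {𝒰 : Set (Set X)} {x : X} {s : Set X} :
    coverStar 𝒰 x ⊆ s ↔ ∀ U ∈ 𝒰, x ∈ U → U ⊆ s :=
  ⟨fun h _ hU hx => (subset_coverStar hU hx).trans h,
    fun h _ ⟨U, hU, hx, hy⟩ => h U hU hx hy⟩

theorem coverStar_mem_nhds [TopologicalSpace X] {𝒰 : Set (Set X)} (ho : ∀ U ∈ 𝒰, IsOpen U)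
    (hc : ⋃₀ 𝒰 = univ) (x : X) : coverStar 𝒰 x ∈ 𝓝 x := by
  obtain ⟨U, hU, hx⟩ := mem_sUnion.1 (hc.symm ▸ mem_univ x)
  exact mem_of_superset ((ho U hU).mem_nhds hx) (subset_coverStar hU hx)

theorem coverEntourage_comp_subset {𝒰 𝒱 : Set (Set X)}
    (h𝒱 : ∀ x, ∃ U ∈ 𝒰, coverStar 𝒱 x ⊆ U) :
    coverEntourage 𝒱 ○ coverEntourage 𝒱 ⊆ coverEntourage 𝒰 := by
  rintro ⟨a, c⟩ ⟨b, ⟨V₁, hV₁, ha, hb₁⟩, ⟨V₂, hV₂, hb₂, hc⟩⟩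
  obtain ⟨U, hU, hstar⟩ := h𝒱 b
  exact ⟨U, hU, hstar ⟨V₁, hV₁, hb₁, ha⟩, hstar ⟨V₂, hV₂, hb₂, hc⟩⟩

end CoverStar

/-- A form of the Alexandroff–Urysohn metrization theorem. -/
theorem metrizableSpace_of_coverStar_hasBasis {X : Type*} [TopologicalSpace X] [T0Space X]
    (𝒰 : ℕ → Set (Set X)) (hstar : ∀ n x, ∃ U ∈ 𝒰 n, coverStar (𝒰 (n + 1)) x ⊆ U)
    (hnhds : ∀ x, (𝓝 x).HasBasis (fun _ => True) fun n => coverStar (𝒰 n) x) :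
    MetrizableSpace X := by
  set V : ℕ → SetRel X X := fun n => coverEntourage (𝒰 n)
  have hrefl : ∀ n x, (x, x) ∈ V n := fun n x =>
    show x ∈ coverStar (𝒰 n) x from mem_of_mem_nhds ((hnhds x).mem_of_mem trivial)
  have hsymm : ∀ n, V n ⊆ Prod.swap ⁻¹' V n := fun n _ ⟨U, hU, h₁, h₂⟩ => ⟨U, hU, h₂, h₁⟩
  have hcomp : ∀ n, V (n + 1) ○ V (n + 1) ⊆ V n := fun n => coverEntourage_comp_subset (hstar n)
  have hanti : Antitone V :=
    antitone_nat_of_succ_le fun n p hp => hcomp n ⟨p.2, hp, hrefl (n + 1) p.2⟩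
  have hbasis : (⨅ n, 𝓟 (V n)).HasBasis (fun _ => True) V :=
    hasBasis_iInf_principal hanti.directed_ge
  let core : UniformSpace.Core X := UniformSpace.Core.mk' (⨅ n, 𝓟 (V n))
    (fun r hr x => by
      obtain ⟨n, -, hn⟩ := hbasis.mem_iff.1 hr
      exact hn (hrefl n x))
    (fun r hr => by
      obtain ⟨n, -, hn⟩ := hbasis.mem_iff.1 hr
      exact hbasis.mem_iff.2 ⟨n, trivial, fun _ hp => hn (hsymm n hp)⟩)
    (fun r hr => by
      obtain ⟨n, -, hn⟩ := hbasis.mem_iff.1 hr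
      exact ⟨V (n + 1), hbasis.mem_of_mem trivial, (hcomp n).trans hn⟩)
  have htop : ‹TopologicalSpace X› = core.toTopologicalSpace := by
    refine ext_nhds fun x => ?_
    rw [core.nhds_toTopologicalSpace]
    exact (hnhds x).eq_of_same_basis (hbasis.comap (Prod.mk x))
  let _ : UniformSpace X := .ofCoreEq core _ htop
  have : (𝓤 X).IsCountablyGenerated := hbasis.isCountablyGenerated
  exact UniformSpace.metrizableSpace

theorem exists_open_star_refinement_of_locallyFinite {X ι : Type*} [TopologicalSpace X]
    {F u : ι → Set X} (hF : ∀ i, IsClosed (F i)) (hlf : LocallyFinite F) (hFU : ⋃ i, F i = univ)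
    (hu : ∀ i, IsOpen (u i)) (hFu : ∀ i, F i ⊆ u i) :
    ∃ 𝒲 : Set (Set X), (∀ W ∈ 𝒲, IsOpen W) ∧ ⋃₀ 𝒲 = univ ∧ ∀ x, ∃ i, coverStar 𝒲 x ⊆ u i := by
  -- A point of `F i` can lie in `N y` only if `y ∈ F i`, and then `N y ⊆ u i`.
  set N : X → Set X := fun y =>
    interior ((⋂ i ∈ {i | y ∈ F i}, u i) ∩ ⋂ (i) (_ : y ∉ F i), (F i)ᶜ)
  have hN : ∀ y, y ∈ N y := fun y => mem_interior_iff_mem_nhds.2 <|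
    inter_mem ((biInter_mem (hlf.point_finite y)).2 fun i hi => (hu i).mem_nhds (hFu i hi))
      (hlf.iInter_compl_mem_nhds hF y)
  refine ⟨range N, forall_mem_range.2 fun _ => isOpen_interior,
    sUnion_range N ▸ eq_univ_of_forall fun y => mem_iUnion.2 ⟨y, hN y⟩, fun x => ?_⟩
  obtain ⟨i, hxi⟩ := mem_iUnion.1 (hFU.symm ▸ mem_univ x)
  refine ⟨i, coverStar_subset_iff.2 ?_⟩
  rintro _ ⟨y, rfl⟩ hxy
  have hyi : y ∈ F i := by
    by_contra hyi
    exact (mem_iInter₂.1 (interior_subset hxy).2 i hyi) hxi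
  exact interior_subset.trans (inter_subset_left.trans (biInter_subset_of_mem hyi))

theorem exists_open_star_refinement {X ι : Type*} [TopologicalSpace X] [NormalSpace X]
    [ParacompactSpace X] (u : ι → Set X) (hu : ∀ i, IsOpen (u i)) (huc : ⋃ i, u i = univ) :
    ∃ 𝒲 : Set (Set X), (∀ W ∈ 𝒲, IsOpen W) ∧ ⋃₀ 𝒲 = univ ∧ ∀ x, ∃ i, coverStar 𝒲 x ⊆ u i := by
  obtain ⟨v, hv, hvc, hvlf, hvu⟩ := precise_refinement u hu huc
  obtain ⟨F, hFc, hF, hFv⟩ := exists_iUnion_eq_closed_subset hv hvlf.point_finite hvc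
  obtain ⟨𝒲, h𝒲, h𝒲c, hstar⟩ :=
    exists_open_star_refinement_of_locallyFinite hF (hvlf.subset hFv) hFc hv hFv
  exact ⟨𝒲, h𝒲, h𝒲c, fun x => (hstar x).imp fun i hi => hi.trans (hvu i)⟩

theorem exists_open_star_refinement_through_basis {X : Type*} [TopologicalSpace X]
    [NormalSpace X] [ParacompactSpace X] {ℬ : Set (Set X)} (hℬ : IsTopologicalBasis ℬ)
    {𝒰 : Set (Set X)} (h𝒰 : ∀ U ∈ 𝒰, IsOpen U) (h𝒰c : ⋃₀ 𝒰 = univ) :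
    ∃ 𝒱 : Set (Set X), (∀ V ∈ 𝒱, IsOpen V) ∧ ⋃₀ 𝒱 = univ ∧
      ∀ x, ∃ B ∈ ℬ, ∃ U ∈ 𝒰, coverStar 𝒱 x ⊆ B ∧ B ⊆ U := by
  let 𝒞 : Set (Set X) := {B ∈ ℬ | ∃ U ∈ 𝒰, B ⊆ U}
  have h𝒞c : ⋃ C : 𝒞, (C : Set X) = univ := by
    refine eq_univ_of_forall fun x => ?_
    obtain ⟨U, hU, hx⟩ := mem_sUnion.1 (h𝒰c.symm ▸ mem_univ x)
    obtain ⟨B, hB, hxB, hBU⟩ := hℬ.exists_subset_of_mem_open hx (h𝒰 U hU)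
    exact mem_iUnion.2 ⟨⟨B, hB, U, hU, hBU⟩, hxB⟩
  obtain ⟨𝒱, h𝒱, h𝒱c, hstar⟩ :=
    exists_open_star_refinement (fun C : 𝒞 => (C : Set X)) (fun C => hℬ.isOpen C.2.1) h𝒞c
  refine ⟨𝒱, h𝒱, h𝒱c, fun x => ?_⟩
  obtain ⟨⟨B, hB, U, hU, hBU⟩, hxB⟩ := hstar x
  exact ⟨B, hB, U, hU, hxB, hBU⟩

theorem HasBCO.exists_coverStar_hasBasis {X : Type*} [TopologicalSpace X] [NormalSpace X]
    [ParacompactSpace X] (h : HasBCO X) :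
    ∃ 𝒰 : ℕ → Set (Set X), (∀ n x, ∃ U ∈ 𝒰 n, coverStar (𝒰 (n + 1)) x ⊆ U) ∧
      ∀ x, (𝓝 x).HasBasis (fun _ => True) fun n => coverStar (𝒰 n) x := by
  obtain ⟨ℬ, hℬo, hℬnhds, hBCO⟩ := h
  have hℬ : ∀ n, IsTopologicalBasis (ℬ n) := fun n =>
    isTopologicalBasis_of_isOpen_of_nhds (hℬo n) fun x U hx hU => hℬnhds n U hU x hx
  let OpenCover := {𝒰 : Set (Set X) // (∀ U ∈ 𝒰, IsOpen U) ∧ ⋃₀ 𝒰 = univ}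
  have hnext (n : ℕ) (𝒰 : OpenCover) : ∃ 𝒱 : OpenCover,
      ∀ x, ∃ B ∈ ℬ n, ∃ U ∈ 𝒰.1, coverStar 𝒱.1 x ⊆ B ∧ B ⊆ U :=
    let ⟨𝒱, h𝒱, h𝒱c, hstar⟩ := exists_open_star_refinement_through_basis (hℬ n) 𝒰.2.1 𝒰.2.2
    ⟨⟨𝒱, h𝒱, h𝒱c⟩, hstar⟩
  choose next hnext using hnext
  let 𝒞 : ℕ → OpenCover := fun n =>
    Nat.rec ⟨{univ}, by simp, by simp⟩ (fun k 𝒰 => next k 𝒰) n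
  have h𝒞 : ∀ n x, ∃ B ∈ ℬ n, ∃ U ∈ (𝒞 n).1, coverStar (𝒞 (n + 1)).1 x ⊆ B ∧ B ⊆ U :=
    fun n => hnext n (𝒞 n)
  have hnhds : ∀ n x, coverStar (𝒞 n).1 x ∈ 𝓝 x := fun n => coverStar_mem_nhds (𝒞 n).2.1 (𝒞 n).2.2
  refine ⟨fun n => (𝒞 (n + 1)).1, fun n x => ?_, fun x => ⟨fun W => ⟨fun hW => ?_, ?_⟩⟩⟩
  · obtain ⟨B, -, U, hU, hstar, hBU⟩ := h𝒞 (n + 1) x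
    exact ⟨U, hU, hstar.trans hBU⟩
  · choose B hB U hU hstar hBU using fun n => h𝒞 n x
    have hxB : ∀ n, x ∈ B n := fun n => hstar n (mem_of_mem_nhds (hnhds (n + 1) x))
    -- `U (n + 1)` is a member of `𝒞 (n + 1)` through `x`, so it lies in that cover's star of `x`.
    have hanti : Antitone B := antitone_nat_of_succ_le fun n =>
      (hBU (n + 1)).trans ((subset_coverStar (hU (n + 1)) (hBU (n + 1) (hxB (n + 1)))).trans
        (hstar n))
    obtain ⟨n, hn⟩ := hBCO x B hB hxB hanti (interior W) isOpen_interior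
      (mem_interior_iff_mem_nhds.2 hW)
    exact ⟨n, trivial, (hstar n).trans (hn.trans interior_subset)⟩
  · rintro ⟨n, -, hn⟩
    exact mem_of_superset (hnhds (n + 1) x) hn

theorem paracompact_BCO_metrizable {X : Type*} [TopologicalSpace X] [T2Space X]
    [ParacompactSpace X] (h : HasBCO X) : TopologicalSpace.MetrizableSpace X := by
  obtain ⟨𝒰, hstar, hnhds⟩ := h.exists_coverStar_hasBasis
  exact metrizableSpace_of_coverStar_hasBasis 𝒰 hstar hnhds
end

section
/- Let Y be a dense subspace of a compact Hausdorff space bG, let (bₙ) be a sequence of points of Y converging to a point c, and suppose bG is first-countable at each bₙ with countable neighborhood base ηₙ. Then ⋃ₙ ηₙ contains a countable local π-base at c in bG; consequently any dense subspace containing c has countable π-character at c. -/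
open Topology Set

section

variable {X : Type*} [TopologicalSpace X]

def IsLocalPiBase (𝒰 : Set (Set X)) (x : X) : Prop :=
  (∀ W ∈ 𝒰, IsOpen W ∧ W.Nonempty) ∧ ∀ V : Set X, IsOpen V → x ∈ V → ∃ W ∈ 𝒰, W ⊆ V

theorem isLocalPiBase_iUnion_of_mem_closure_range {b : ℕ → X} {c : X}
    (hc : c ∈ closure (range b)) {η : ℕ → Set (Set X)}
    (hηo : ∀ n, ∀ W ∈ η n, IsOpen W ∧ b n ∈ W)
    (hηb : ∀ n, ∀ V : Set X, IsOpen V → b n ∈ V → ∃ W ∈ η n, W ⊆ V) :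
    IsLocalPiBase (⋃ n, η n) c := by
  constructor
  · intro W hW
    obtain ⟨n, hn⟩ := mem_iUnion.1 hW
    exact ⟨(hηo n W hn).1, b n, (hηo n W hn).2⟩
  · intro V hV hcV
    obtain ⟨_, hn, n, rfl⟩ := mem_closure_iff.1 hc V hV hcV
    obtain ⟨W, hW, hWV⟩ := hηb n V hV hn
    exact ⟨W, mem_iUnion.2 ⟨n, hW⟩, hWV⟩

theorem IsLocalPiBase.preimage_val {𝒰 : Set (Set X)} {x : X} (h : IsLocalPiBase 𝒰 x)
    {D : Set X} (hD : Dense D) (hxD : x ∈ D) :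
    IsLocalPiBase ((fun W ↦ ((↑) : D → X) ⁻¹' W) '' 𝒰) (⟨x, hxD⟩ : D) := by
  constructor
  · rintro _ ⟨W, hW, rfl⟩
    obtain ⟨hWo, hWne⟩ := h.1 W hW
    obtain ⟨y, hyW, hyD⟩ := hD.inter_open_nonempty W hWo hWne
    exact ⟨hWo.preimage continuous_subtype_val, ⟨y, hyD⟩, hyW⟩
  · rintro _ ⟨U, hU, rfl⟩ hxU
    obtain ⟨W, hW, hWU⟩ := h.2 U hU hxU
    exact ⟨_, mem_image_of_mem _ hW, preimage_mono hWU⟩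

end

theorem pi_base_at_cluster_point_general
    {bG : Type*} [TopologicalSpace bG]
    (b : ℕ → bG)
    (c : bG)
    -- `c` is a cluster point of `(bₙ)`: every neighborhood contains infinitely many `bₙ`
    (hc : ∀ V ∈ 𝓝 c, {n : ℕ | b n ∈ V}.Infinite)
    (η : ℕ → Set (Set bG)) (hηc : ∀ n, (η n).Countable)
    -- each `ηₙ` is a neighborhood base at `bₙ` consisting of open sets
    (hηo : ∀ n, ∀ W ∈ η n, IsOpen W ∧ b n ∈ W)
    (hηb : ∀ n, ∀ V : Set bG, IsOpen V → b n ∈ V → ∃ W ∈ η n, W ⊆ V) :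
    (∃ 𝒰 : Set (Set bG), 𝒰 ⊆ ⋃ n, η n ∧ 𝒰.Countable ∧
      (∀ W ∈ 𝒰, IsOpen W ∧ W.Nonempty) ∧
      ∀ V : Set bG, IsOpen V → c ∈ V → ∃ W ∈ 𝒰, W ⊆ V) ∧
    ∀ (D : Set bG) (hD : Dense D) (hcD : c ∈ D),
      ∃ 𝒱 : Set (Set ↥D), 𝒱.Countable ∧ (∀ W ∈ 𝒱, IsOpen W ∧ W.Nonempty) ∧
        ∀ V : Set ↥D, IsOpen V → (⟨c, hcD⟩ : ↥D) ∈ V → ∃ W ∈ 𝒱, W ⊆ V := by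
  have hcl : c ∈ closure (range b) := mem_closure_iff_nhds.2 fun V hV ↦
    let ⟨n, hn⟩ := (hc V hV).nonempty
    ⟨b n, hn, n, rfl⟩
  have hbase := isLocalPiBase_iUnion_of_mem_closure_range hcl hηo hηb
  have hcount : (⋃ n, η n).Countable := countable_iUnion hηc
  refine ⟨⟨_, subset_rfl, hcount, hbase⟩, fun D hD hcD ↦ ?_⟩
  exact ⟨_, hcount.image _, hbase.preimage_val hD hcD⟩

theorem pi_base_at_cluster_point
    {bG : Type*} [TopologicalSpace bG] [CompactSpace bG] [T2Space bG]
    (Y : Set bG) (hY : Dense Y)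
    (b : ℕ → bG) (hb : ∀ n, b n ∈ Y)
    (c : bG)
    -- `c` is a cluster point of `(bₙ)`: every neighborhood contains infinitely many `bₙ`
    (hc : ∀ V ∈ 𝓝 c, {n : ℕ | b n ∈ V}.Infinite)
    (η : ℕ → Set (Set bG)) (hηc : ∀ n, (η n).Countable)
    -- each `ηₙ` is a neighborhood base at `bₙ` consisting of open sets
    (hηo : ∀ n, ∀ W ∈ η n, IsOpen W ∧ b n ∈ W)
    (hηb : ∀ n, ∀ V : Set bG, IsOpen V → b n ∈ V → ∃ W ∈ η n, W ⊆ V) :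
    (∃ 𝒰 : Set (Set bG), 𝒰 ⊆ ⋃ n, η n ∧ 𝒰.Countable ∧
      (∀ W ∈ 𝒰, IsOpen W ∧ W.Nonempty) ∧
      ∀ V : Set bG, IsOpen V → c ∈ V → ∃ W ∈ 𝒰, W ⊆ V) ∧
    ∀ (D : Set bG) (hD : Dense D) (hcD : c ∈ D),
      ∃ 𝒱 : Set (Set ↥D), 𝒱.Countable ∧ (∀ W ∈ 𝒱, IsOpen W ∧ W.Nonempty) ∧
        ∀ V : Set ↥D, IsOpen V → (⟨c, hcD⟩ : ↥D) ∈ V → ∃ W ∈ 𝒱, W ⊆ V :=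
  pi_base_at_cluster_point_general b c hc η hηc hηo hηb
end

section
/- Let X be a Hausdorff topological group in which some point has countable π-character. Then X is first-countable, and hence metrizable. -/
open Topology Set Filter
open scoped Pointwise Uniformity

/-!
If `𝒰` is a π-base at `x` in a topological group, the open sets `U⁻¹ * U`, `U ∈ 𝒰`, form a
neighbourhood basis at `1`: given a neighbourhood `V` of `1`, continuity of `(a, b) ↦ a⁻¹ * b`
at `(x, x)` yields a neighbourhood `W` of `x` with `W⁻¹ * W ⊆ V`, and any `U ∈ 𝒰` inside `W`
will do. So `1`, and by homogeneity every point, has countable character; a first-countable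
T₀ group is metrizable by the Birkhoff–Kakutani theorem, applied to its right uniformity.
-/

structure IsPiBaseAt {X : Type*} [TopologicalSpace X] (𝒰 : Set (Set X)) (x : X) : Prop where
  isOpen : ∀ U ∈ 𝒰, IsOpen U
  nonempty : ∀ U ∈ 𝒰, U.Nonempty
  exists_subset_of_isOpen : ∀ V : Set X, IsOpen V → x ∈ V → ∃ U ∈ 𝒰, U ⊆ V

namespace IsPiBaseAt

variable {X : Type*} [TopologicalSpace X] {𝒰 : Set (Set X)} {x : X}

theorem exists_subset_of_mem_nhds (h𝒰 : IsPiBaseAt 𝒰 x) {W : Set X} (hW : W ∈ 𝓝 x) :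
    ∃ U ∈ 𝒰, U ⊆ W := by
  obtain ⟨U, hU, hUW⟩ :=
    h𝒰.exists_subset_of_isOpen _ isOpen_interior (mem_interior_iff_mem_nhds.2 hW)
  exact ⟨U, hU, hUW.trans interior_subset⟩

variable [Group X] [IsTopologicalGroup X]

theorem nhds_one_hasBasis_inv_mul (h𝒰 : IsPiBaseAt 𝒰 x) :
    (𝓝 (1 : X)).HasBasis (· ∈ 𝒰) (fun U => U⁻¹ * U) := by
  refine ⟨fun V => ⟨fun hV => ?_, fun ⟨U, hU, hUV⟩ => ?_⟩⟩
  · have hlim : Tendsto (fun p : X × X => p.1⁻¹ * p.2) (𝓝 x ×ˢ 𝓝 x) (𝓝 1) := by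
      have hcont : Continuous fun p : X × X => p.1⁻¹ * p.2 :=
        continuous_fst.inv.mul continuous_snd
      simpa [nhds_prod_eq] using hcont.tendsto (x, x)
    obtain ⟨W, hW, hWV⟩ := mem_prod_self_iff.1 (hlim hV)
    obtain ⟨U, hU, hUW⟩ := h𝒰.exists_subset_of_mem_nhds hW
    refine ⟨U, hU, ?_⟩
    rintro _ ⟨a, ha, b, hb, rfl⟩
    simpa using hWV (mk_mem_prod (hUW (mem_inv.1 ha)) (hUW hb))
  · have hone : (1 : X) ∈ U⁻¹ * U :=
      one_mem_inv_mul_iff.2 (not_disjoint_iff_nonempty_inter.2 (by simpa using h𝒰.nonempty U hU))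
    exact mem_of_superset (((h𝒰.isOpen U hU).mul_left).mem_nhds hone) hUV

theorem isCountablyGenerated_nhds_one (h𝒰 : IsPiBaseAt 𝒰 x) (hc : 𝒰.Countable) :
    (𝓝 (1 : X)).IsCountablyGenerated :=
  HasCountableBasis.isCountablyGenerated ⟨h𝒰.nhds_one_hasBasis_inv_mul, hc⟩

end IsPiBaseAt

namespace IsTopologicalGroup

variable {G : Type*} [TopologicalSpace G] [Group G] [IsTopologicalGroup G]

theorem firstCountableTopology_of_isCountablyGenerated_nhds_one
    [(𝓝 (1 : G)).IsCountablyGenerated] : FirstCountableTopology G :=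
  ⟨fun y => map_mul_left_nhds_one y ▸ Filter.map.isCountablyGenerated _ _⟩

theorem metrizableSpace [FirstCountableTopology G] [T0Space G] :
    TopologicalSpace.MetrizableSpace G := by
  let : UniformSpace G := IsTopologicalGroup.rightUniformSpace G
  have : (𝓤 G).IsCountablyGenerated := by
    rw [uniformity_eq_comap_nhds_one']
    exact Filter.comap.isCountablyGenerated _ _
  exact UniformSpace.metrizableSpace

end IsTopologicalGroup

theorem group_countable_pi_character_metrizable
    {X : Type*} [TopologicalSpace X] [Group X] [IsTopologicalGroup X] [T2Space X]
    (h : ∃ x : X, ∃ 𝒰 : Set (Set X), 𝒰.Countable ∧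
      (∀ U ∈ 𝒰, IsOpen U ∧ U.Nonempty) ∧
      ∀ V : Set X, IsOpen V → x ∈ V → ∃ U ∈ 𝒰, U ⊆ V) :
    FirstCountableTopology X ∧ TopologicalSpace.MetrizableSpace X := by
  obtain ⟨x, 𝒰, hc, hopen, hsub⟩ := h
  have h𝒰 : IsPiBaseAt 𝒰 x :=
    ⟨fun U hU => (hopen U hU).1, fun U hU => (hopen U hU).2, hsub⟩
  have := h𝒰.isCountablyGenerated_nhds_one hc
  have : FirstCountableTopology X :=
    IsTopologicalGroup.firstCountableTopology_of_isCountablyGenerated_nhds_one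
  exact ⟨this, IsTopologicalGroup.metrizableSpace⟩
end
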